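/- arXiv:2302.05835 — 3 statements merged into one kernel-verified Lean document; each statement's English description precedes it below -/
import Mathlib

section
/- Let ε, δ ∈ (0,1) with ε ≤ δ³/k². Suppose U_1, ..., U_k are (not necessarily distinct) vertex sets in a graph G, all pairs (U_i, U_j) are ε-regular, and ∏_{1≤i<j≤k} d(U_i,U_j) ≥ δ. Let Q be a uniformly random copy of K_k with one vertex in each U_i; say a vertex u extends Q if u is adjacent to every vertex of Q. Then for any vertex u, Pr(u extends Q) ≥ ∏_{i=1}^k d(u, U_i) − 4δ. -/
open Finset

set_option linter.unusedSectionVars false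
set_option maxHeartbeats 1000000

namespace CFW


variable {V : Type*} [Fintype V] [DecidableEq V] (G : SimpleGraph V) [DecidableRel G.Adj]

noncomputable def Aind (x y : V) : ℝ := if G.Adj x y then 1 else 0

lemma Aind_nonneg (x y : V) : 0 ≤ Aind G x y := by unfold Aind; positivity

lemma Aind_le_one (x y : V) : Aind G x y ≤ 1 := by
  unfold Aind; split <;> norm_num

lemma sum_Aind (A' B' : Finset V) :
    ∑ y ∈ A', ∑ x ∈ B', Aind G y x = ((G.interedges A' B').card : ℝ) := by
  rw [SimpleGraph.interedges_def, Finset.card_filter]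
  push_cast
  rw [Finset.sum_product]
  simp [Aind]

lemma star {ε : ℝ} (hε : 0 < ε) {A B A' B' : Finset V} (h : G.IsUniform ε A B)
    (hA : A' ⊆ A) (hB : B' ⊆ B) :
    |(∑ y ∈ A', ∑ x ∈ B', Aind G y x) - (G.edgeDensity A B : ℝ) * A'.card * B'.card|
      ≤ ε * A.card * B.card := by
  have hd0 : (0:ℝ) ≤ (G.edgeDensity A B : ℝ) := by
    exact_mod_cast Rel.edgeDensity_nonneg _ A B
  have hd1 : (G.edgeDensity A B : ℝ) ≤ 1 := by
    exact_mod_cast Rel.edgeDensity_le_one _ A B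
  have hAc : (A'.card : ℝ) ≤ A.card := by exact_mod_cast card_le_card hA
  have hBc : (B'.card : ℝ) ≤ B.card := by exact_mod_cast card_le_card hB
  have hA0 : (0:ℝ) ≤ A'.card := by positivity
  have hB0 : (0:ℝ) ≤ B'.card := by positivity
  have hAB0 : (0:ℝ) ≤ (A.card:ℝ) := by positivity
  have hBB0 : (0:ℝ) ≤ (B.card:ℝ) := by positivity
  rw [sum_Aind]
  have hele : ((G.interedges A' B').card : ℝ) ≤ (A'.card : ℝ) * B'.card := by
    exact_mod_cast G.card_interedges_le_mul A' B'
  have he0 : (0:ℝ) ≤ ((G.interedges A' B').card : ℝ) := by positivity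
  have hduv : (G.edgeDensity A B : ℝ) * A'.card * B'.card ≤ (A'.card:ℝ) * B'.card := by
    nlinarith [mul_nonneg hA0 hB0]
  have hduv0 : (0:ℝ) ≤ (G.edgeDensity A B : ℝ) * A'.card * B'.card := by positivity
  by_cases hcA : (A.card : ℝ) * ε ≤ A'.card
  · by_cases hcB : (B.card : ℝ) * ε ≤ B'.card
    · rcases eq_or_ne (A'.card : ℝ) 0 with h0 | h0
      · have huv : (A'.card:ℝ) * B'.card = 0 := by rw [h0]; ring
        rw [abs_le]
        constructor <;> nlinarith [mul_nonneg (mul_nonneg hε.le hAB0) hBB0]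
      rcases eq_or_ne (B'.card : ℝ) 0 with h1 | h1
      · have huv : (A'.card:ℝ) * B'.card = 0 := by rw [h1]; ring
        rw [abs_le]
        constructor <;> nlinarith [mul_nonneg (mul_nonneg hε.le hAB0) hBB0]
      have hdd := h hA hB hcA hcB
      have he : ((G.interedges A' B').card : ℝ)
          = (G.edgeDensity A' B' : ℝ) * (A'.card * B'.card) := by
        have h2 := congrArg (fun q : ℚ => (q:ℝ)) (G.card_interedges_div_card A' B')
        push_cast at h2
        field_simp at h2
        linarith [h2]
      rw [he]
      have e1 : (G.edgeDensity A' B' : ℝ) * (A'.card * B'.card)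
          - (G.edgeDensity A B : ℝ) * A'.card * B'.card
          = ((G.edgeDensity A' B' : ℝ) - (G.edgeDensity A B : ℝ)) * (A'.card * B'.card) := by
        ring
      rw [e1, abs_mul, abs_of_nonneg (mul_nonneg hA0 hB0)]
      have habs0 := abs_nonneg ((G.edgeDensity A' B' : ℝ) - (G.edgeDensity A B : ℝ))
      nlinarith [mul_le_mul hAc hBc hB0 hAB0,
        mul_le_mul_of_nonneg_right hdd.le (mul_nonneg hA0 hB0)]
    · push_neg at hcB
      have huv : (A'.card:ℝ) * B'.card ≤ ε * A.card * B.card := by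
        calc (A'.card:ℝ) * B'.card ≤ (A'.card:ℝ) * ((B.card:ℝ) * ε) :=
              mul_le_mul_of_nonneg_left hcB.le hA0
          _ ≤ (A.card:ℝ) * ((B.card:ℝ) * ε) :=
              mul_le_mul_of_nonneg_right hAc (by positivity)
          _ = ε * A.card * B.card := by ring
      rw [abs_le]; constructor <;> linarith
  · push_neg at hcA
    have huv : (A'.card:ℝ) * B'.card ≤ ε * A.card * B.card := by
      calc (A'.card:ℝ) * B'.card ≤ ((A.card:ℝ) * ε) * B'.card :=
            mul_le_mul_of_nonneg_right hcA.le hB0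
        _ ≤ ((A.card:ℝ) * ε) * B.card :=
            mul_le_mul_of_nonneg_left hBc (by positivity)
        _ = ε * A.card * B.card := by ring
    rw [abs_le]; constructor <;> linarith




lemma sum_piFinset_fiber {k : ℕ} (X : Fin k → Finset V) (i : Fin k)
    (φ : (Fin k → V) → ℝ) :
    ∑ g ∈ Fintype.piFinset X, φ g
      = ∑ y ∈ X i, ∑ g ∈ Fintype.piFinset (Function.update X i {y}), φ g := by
  rw [← Finset.sum_fiberwise_of_maps_to (g := fun g : Fin k → V => g i)
    (fun g hg => (Fintype.mem_piFinset.1 hg) i) φ]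
  refine Finset.sum_congr rfl fun y hy => ?_
  rw [Fintype.piFinset_update_singleton_eq_filter_piFinset_eq X i hy]

lemma sum_piFinset_update {k : ℕ} (X : Fin k → Finset V) (i : Fin k) (y v₀ : V)
    (φ : (Fin k → V) → ℝ) :
    ∑ g ∈ Fintype.piFinset (Function.update X i {y}), φ g
      = ∑ e ∈ Fintype.piFinset (Function.update X i {v₀}), φ (Function.update e i y) := by
  refine Finset.sum_nbij' (fun g => Function.update g i v₀)
    (fun e => Function.update e i y) ?_ ?_ ?_ ?_ ?_
  · intro g hg
    rw [Fintype.mem_piFinset] at hg ⊢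
    intro j
    rcases eq_or_ne j i with rfl | hji
    · simp
    · simpa [Function.update_of_ne hji] using hg j
  · intro e he
    rw [Fintype.mem_piFinset] at he ⊢
    intro j
    rcases eq_or_ne j i with rfl | hji
    · simp
    · simpa [Function.update_of_ne hji] using he j
  · intro g hg
    have h5 : g i = y := by
      have := (Fintype.mem_piFinset.1 hg) i
      simpa using this
    show Function.update (Function.update g i v₀) i y = g
    rw [Function.update_idem, ← h5, Function.update_eq_self]
  · intro e he
    have h5 : e i = v₀ := by
      have := (Fintype.mem_piFinset.1 he) i
      simpa using this
    show Function.update (Function.update e i y) i v₀ = e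
    rw [Function.update_idem, ← h5, Function.update_eq_self]
  · intro g hg
    have h5 : g i = y := by
      have := (Fintype.mem_piFinset.1 hg) i
      simpa using this
    show φ g = φ (Function.update (Function.update g i v₀) i y)
    rw [Function.update_idem, ← h5, Function.update_eq_self]

lemma ext_sum {k : ℕ} (X : Fin k → Finset V) (i : Fin k) (v₀ : V)
    (φ : (Fin k → V) → ℝ) :
    ∑ g ∈ Fintype.piFinset X, φ g
      = ∑ e ∈ Fintype.piFinset (Function.update X i {v₀}), ∑ y ∈ X i,
          φ (Function.update e i y) := by
  rw [sum_piFinset_fiber X i φ]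
  rw [Finset.sum_congr rfl fun y (hy : y ∈ X i) => sum_piFinset_update X i y v₀ φ]
  exact Finset.sum_comm

lemma ext_sum2 {k : ℕ} (X : Fin k → Finset V) {a b : Fin k} (hab : a ≠ b) (v₀ : V)
    (φ : (Fin k → V) → ℝ) :
    ∑ g ∈ Fintype.piFinset X, φ g
      = ∑ e ∈ Fintype.piFinset (Function.update (Function.update X a {v₀}) b {v₀}),
          ∑ x ∈ X b, ∑ y ∈ X a, φ (Function.update (Function.update e b x) a y) := by
  rw [ext_sum X a v₀ φ]
  rw [ext_sum (Function.update X a {v₀}) b v₀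
    (fun e => ∑ y ∈ X a, φ (Function.update e a y))]
  rw [Function.update_of_ne (Ne.symm hab)]

lemma prod_Aind_mem {k : ℕ} (s : Finset (Fin k × Fin k)) (u : Fin k → V) :
    (∏ q ∈ s, Aind G (u q.1) (u q.2)) = 0 ∨ (∏ q ∈ s, Aind G (u q.1) (u q.2)) = 1 := by
  refine Finset.prod_induction _ (fun r => r = 0 ∨ r = 1) ?_ (Or.inr rfl) ?_
  · rintro x y (rfl | rfl) (rfl | rfl) <;> simp
  · intro q hq
    unfold Aind
    split
    · exact Or.inr rfl
    · exact Or.inl rfl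

lemma sum_indicator_eq {s : Finset V} {α : V → ℝ} [DecidablePred (fun y => α y = 1)]
    (hα : ∀ y ∈ s, α y = 0 ∨ α y = 1) (F : V → ℝ) :
    ∑ y ∈ s, α y * F y = ∑ y ∈ s.filter (fun y => α y = 1), F y := by
  rw [Finset.sum_filter]
  refine Finset.sum_congr rfl fun y hy => ?_
  rcases hα y hy with h0 | h1
  · rw [if_neg (by rw [h0]; exact zero_ne_one), h0, zero_mul]
  · rw [if_pos h1, h1, one_mul]

lemma triple_split {ι : Type*} (s : Finset ι) (p q : ι → Prop)
    [DecidablePred p] [DecidablePred q] (f : ι → ℝ) :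
    ∏ i ∈ s, f i = (∏ i ∈ s.filter p, f i)
      * ((∏ i ∈ (s.filter (fun i => ¬ p i)).filter q, f i)
        * (∏ i ∈ (s.filter (fun i => ¬ p i)).filter (fun i => ¬ q i), f i)) := by
  rw [← Finset.prod_filter_mul_prod_filter_not s p,
    ← Finset.prod_filter_mul_prod_filter_not (s.filter fun i => ¬ p i) q]

lemma crux {k : ℕ} {ε : ℝ} (hε : 0 < ε) (X W : Fin k → Finset V) (hXW : ∀ l, X l ⊆ W l)
    {a b : Fin k} (hab : a ≠ b) (hU : G.IsUniform ε (W a) (W b))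
    (Γ : Finset (Fin k × Fin k))
    (hΓ : ∀ q ∈ Γ, ¬(q.1 = a ∧ q.2 = b) ∧ ¬(q.1 = b ∧ q.2 = a)) :
    |∑ g ∈ Fintype.piFinset X,
        (∏ q ∈ Γ, Aind G (g q.1) (g q.2))
          * (Aind G (g a) (g b) - (G.edgeDensity (W a) (W b) : ℝ))|
      ≤ ε * (W a).card * (W b).card * ∏ l ∈ univ \ {a, b}, ((X l).card : ℝ) := by
  classical
  rcases isEmpty_or_nonempty V with hV | hV
  · haveI : IsEmpty (Fin k → V) := ⟨fun g => hV.false (g a)⟩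
    rw [Finset.eq_empty_of_isEmpty (Fintype.piFinset X)]
    simp only [Finset.sum_empty, abs_zero]
    positivity
  obtain ⟨v₀⟩ := hV
  set d := (G.edgeDensity (W a) (W b) : ℝ) with hd
  rw [ext_sum2 X hab v₀ (fun g => (∏ q ∈ Γ, Aind G (g q.1) (g q.2)) * (Aind G (g a) (g b) - d))]
  set X2 := Function.update (Function.update X a {v₀}) b {v₀} with hX2
  have key : ∀ e : Fin k → V,
      |∑ x ∈ X b, ∑ y ∈ X a,
          (∏ q ∈ Γ, Aind G ((Function.update (Function.update e b x) a y) q.1)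
            ((Function.update (Function.update e b x) a y) q.2))
          * (Aind G ((Function.update (Function.update e b x) a y) a)
              ((Function.update (Function.update e b x) a y) b) - d)|
        ≤ ε * (W a).card * (W b).card := by
    intro e
    -- the three indicator products
    set αf : V → ℝ := fun y => ∏ q ∈ Γ.filter (fun q => q.1 = a ∨ q.2 = a),
      Aind G ((Function.update e a y) q.1) ((Function.update e a y) q.2) with hαf
    set βf : V → ℝ := fun x => ∏ q ∈ (Γ.filter (fun q => ¬(q.1 = a ∨ q.2 = a))).filter
        (fun q => q.1 = b ∨ q.2 = b),
      Aind G ((Function.update e b x) q.1) ((Function.update e b x) q.2) with hβf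
    set γf : ℝ := ∏ q ∈ (Γ.filter (fun q => ¬(q.1 = a ∨ q.2 = a))).filter
        (fun q => ¬(q.1 = b ∨ q.2 = b)), Aind G (e q.1) (e q.2) with hγf
    have hα01 : ∀ y, αf y = 0 ∨ αf y = 1 := fun y => prod_Aind_mem G _ _
    have hβ01 : ∀ x, βf x = 0 ∨ βf x = 1 := fun x => prod_Aind_mem G _ _
    have hγ01 : γf = 0 ∨ γf = 1 := prod_Aind_mem G _ _
    have hsummand : ∀ x ∈ X b, ∀ y ∈ X a,
        (∏ q ∈ Γ, Aind G ((Function.update (Function.update e b x) a y) q.1)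
            ((Function.update (Function.update e b x) a y) q.2))
          * (Aind G ((Function.update (Function.update e b x) a y) a)
              ((Function.update (Function.update e b x) a y) b) - d)
        = βf x * (αf y * (γf * (Aind G y x - d))) := by
      intro x hx y hy
      have hha : (Function.update (Function.update e b x) a y) a = y := by simp
      have hhb : (Function.update (Function.update e b x) a y) b = x := by
        rw [Function.update_of_ne (Ne.symm hab), Function.update_self]
      have hcoordA : ∀ c : Fin k, (c = a ∨ c ≠ b) →
          (Function.update (Function.update e b x) a y) c = Function.update e a y c := by
        intro c hc
        by_cases hca : c = a
        · subst hca; simp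
        · have hcb : c ≠ b := hc.resolve_left hca
          rw [Function.update_of_ne hca, Function.update_of_ne hcb,
            Function.update_of_ne hca]
      have hcoordB : ∀ c : Fin k, c ≠ a →
          (Function.update (Function.update e b x) a y) c = Function.update e b x c := by
        intro c hca
        rw [Function.update_of_ne hca]
      rw [triple_split Γ (fun q => q.1 = a ∨ q.2 = a) (fun q => q.1 = b ∨ q.2 = b)]
      have hprodA : ∏ q ∈ Γ.filter (fun q => q.1 = a ∨ q.2 = a),
          Aind G ((Function.update (Function.update e b x) a y) q.1)
            ((Function.update (Function.update e b x) a y) q.2) = αf y := by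
        refine Finset.prod_congr rfl fun q hq => ?_
        rw [mem_filter] at hq
        obtain ⟨hqΓ, hPa⟩ := hq
        have h1 := hΓ q hqΓ
        have hc1 : q.1 = a ∨ q.1 ≠ b := by
          by_cases hb1 : q.1 = b
          · left
            rcases hPa with h2 | h2
            · exact h2
            · exact absurd ⟨hb1, h2⟩ h1.2
          · right; exact hb1
        have hc2 : q.2 = a ∨ q.2 ≠ b := by
          by_cases hb2 : q.2 = b
          · left
            rcases hPa with h2 | h2
            · exact absurd ⟨h2, hb2⟩ h1.1
            · exact h2
          · right; exact hb2
        rw [hcoordA q.1 hc1, hcoordA q.2 hc2]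
      have hprodB : ∏ q ∈ (Γ.filter (fun q => ¬(q.1 = a ∨ q.2 = a))).filter
          (fun q => q.1 = b ∨ q.2 = b),
          Aind G ((Function.update (Function.update e b x) a y) q.1)
            ((Function.update (Function.update e b x) a y) q.2) = βf x := by
        refine Finset.prod_congr rfl fun q hq => ?_
        rw [mem_filter, mem_filter] at hq
        have hna := hq.1.2
        push_neg at hna
        rw [hcoordB q.1 hna.1, hcoordB q.2 hna.2]
      have hprod0 : ∏ q ∈ (Γ.filter (fun q => ¬(q.1 = a ∨ q.2 = a))).filter
          (fun q => ¬(q.1 = b ∨ q.2 = b)),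
          Aind G ((Function.update (Function.update e b x) a y) q.1)
            ((Function.update (Function.update e b x) a y) q.2) = γf := by
        refine Finset.prod_congr rfl fun q hq => ?_
        rw [mem_filter, mem_filter] at hq
        have hna := hq.1.2
        have hnb := hq.2
        push_neg at hna
        push_neg at hnb
        rw [hcoordB q.1 hna.1, hcoordB q.2 hna.2,
          Function.update_of_ne hnb.1, Function.update_of_ne hnb.2]
      rw [hprodA, hprodB, hprod0, hha, hhb]
      ring
    rw [Finset.sum_congr rfl (fun x hx => Finset.sum_congr rfl (fun y hy => hsummand x hx y hy))]
    have step1 : ∀ x ∈ X b, ∑ y ∈ X a, βf x * (αf y * (γf * (Aind G y x - d)))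
        = βf x * ∑ y ∈ (X a).filter (fun y => αf y = 1), (γf * (Aind G y x - d)) := by
      intro x hx
      rw [← sum_indicator_eq (s := X a) (α := αf) (fun y hy => hα01 y) (fun y => γf * (Aind G y x - d)),
        Finset.mul_sum]
    rw [Finset.sum_congr rfl step1]
    rw [sum_indicator_eq (s := X b) (α := βf) (fun x hx => hβ01 x)
      (fun x => ∑ y ∈ (X a).filter (fun y => αf y = 1), (γf * (Aind G y x - d)))]
    have step2 : ∑ x ∈ (X b).filter (fun x => βf x = 1),
        ∑ y ∈ (X a).filter (fun y => αf y = 1), (γf * (Aind G y x - d))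
        = γf * ∑ x ∈ (X b).filter (fun x => βf x = 1),
            ∑ y ∈ (X a).filter (fun y => αf y = 1), (Aind G y x - d) := by
      rw [Finset.mul_sum]
      refine Finset.sum_congr rfl fun x hx => ?_
      rw [Finset.mul_sum]
    rw [step2]
    have hSrw : ∑ x ∈ (X b).filter (fun x => βf x = 1),
        ∑ y ∈ (X a).filter (fun y => αf y = 1), (Aind G y x - d)
        = (∑ y ∈ (X a).filter (fun y => αf y = 1),
            ∑ x ∈ (X b).filter (fun x => βf x = 1), Aind G y x)
          - d * ((X a).filter (fun y => αf y = 1)).card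
            * ((X b).filter (fun x => βf x = 1)).card := by
      rw [Finset.sum_comm]
      simp only [Finset.sum_sub_distrib, Finset.sum_const, nsmul_eq_mul]
      ring
    rw [abs_mul, hSrw]
    have hstar := star G hε (A' := (X a).filter (fun y => αf y = 1))
      (B' := (X b).filter (fun x => βf x = 1)) hU
      ((Finset.filter_subset _ _).trans (hXW a))
      ((Finset.filter_subset _ _).trans (hXW b))
    have h01 : |γf| ≤ 1 := by rcases hγ01 with h | h <;> rw [h] <;> simp
    have hb0 := abs_nonneg ((∑ y ∈ (X a).filter (fun y => αf y = 1),
        ∑ x ∈ (X b).filter (fun x => βf x = 1), Aind G y x)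
          - d * ((X a).filter (fun y => αf y = 1)).card
            * ((X b).filter (fun x => βf x = 1)).card)
    calc |γf| * _ ≤ 1 * _ := mul_le_mul_of_nonneg_right h01 hb0
      _ = _ := one_mul _
      _ ≤ ε * (W a).card * (W b).card := hstar
  refine le_trans (Finset.abs_sum_le_sum_abs _ _) ?_
  calc ∑ e ∈ Fintype.piFinset X2, |∑ x ∈ X b, ∑ y ∈ X a,
          (∏ q ∈ Γ, Aind G ((Function.update (Function.update e b x) a y) q.1)
            ((Function.update (Function.update e b x) a y) q.2))
          * (Aind G ((Function.update (Function.update e b x) a y) a)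
              ((Function.update (Function.update e b x) a y) b) - d)|
      ≤ ∑ e ∈ Fintype.piFinset X2, (ε * (W a).card * (W b).card) :=
        Finset.sum_le_sum (fun e he => key e)
    _ = ((Fintype.piFinset X2).card : ℝ) * (ε * (W a).card * (W b).card) := by
        rw [Finset.sum_const, nsmul_eq_mul]
    _ = ε * (W a).card * (W b).card * ∏ l ∈ univ \ {a, b}, ((X l).card : ℝ) := by
        rw [Fintype.card_piFinset]
        have hcard : ((∏ l, (X2 l).card : ℕ) : ℝ)
            = ∏ l ∈ univ \ {a, b}, ((X l).card : ℝ) := by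
          push_cast
          rw [← Finset.prod_sdiff (subset_univ ({a, b} : Finset (Fin k)))]
          have h1 : ∏ l ∈ ({a, b} : Finset (Fin k)), ((X2 l).card : ℝ) = 1 := by
            rw [Finset.prod_pair hab]
            rw [hX2]
            rw [Function.update_of_ne hab, Function.update_self, Function.update_self]
            simp
          have h2 : ∏ l ∈ univ \ {a, b}, ((X2 l).card : ℝ)
              = ∏ l ∈ univ \ {a, b}, ((X l).card : ℝ) := by
            refine Finset.prod_congr rfl fun l hl => ?_
            rw [mem_sdiff, mem_insert, mem_singleton] at hl
            push_neg at hl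
            rw [hX2, Function.update_of_ne hl.2.2, Function.update_of_ne hl.2.1]
          rw [h1, h2, mul_one]
        rw [hcard]
        ring
/-- the set of ordered pairs `i < j` in `Fin k`. -/
def allPairs (k : ℕ) : Finset (Fin k × Fin k) :=
  Finset.univ.filter (fun q : Fin k × Fin k => q.1 < q.2)

lemma dens_nonneg (s t : Finset V) : (0:ℝ) ≤ (G.edgeDensity s t : ℝ) := by
  exact_mod_cast Rel.edgeDensity_nonneg _ s t

lemma dens_le_one (s t : Finset V) : (G.edgeDensity s t : ℝ) ≤ 1 := by
  exact_mod_cast Rel.edgeDensity_le_one _ s t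

lemma count_aux {k : ℕ} {ε : ℝ} (hε : 0 < ε) (X W : Fin k → Finset V)
    (hXW : ∀ l, X l ⊆ W l)
    (hreg : ∀ i j, i ≠ j → G.IsUniform ε (W i) (W j)) :
    ∀ s : Finset (Fin k × Fin k), s ⊆ allPairs k →
    |(∑ g ∈ Fintype.piFinset X, (∏ q ∈ s, Aind G (g q.1) (g q.2))
        * ∏ q ∈ allPairs k \ s, (G.edgeDensity (W q.1) (W q.2) : ℝ))
      - (∑ g ∈ Fintype.piFinset X, (∏ q ∈ (∅ : Finset (Fin k × Fin k)), Aind G (g q.1) (g q.2))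
        * ∏ q ∈ allPairs k \ (∅ : Finset (Fin k × Fin k)), (G.edgeDensity (W q.1) (W q.2) : ℝ))|
      ≤ s.card * (ε * ∏ l, ((W l).card : ℝ)) := by
  classical
  intro s
  induction s using Finset.induction_on with
  | empty =>
    intro _
    simp
  | @insert q₀ t hq₀ ih =>
    intro hsub
    have htA : t ⊆ allPairs k := (Finset.subset_insert q₀ t).trans hsub
    have hq0A : q₀ ∈ allPairs k := hsub (Finset.mem_insert_self q₀ t)
    have hq0lt : q₀.1 < q₀.2 := by
      have := Finset.mem_filter.1 hq0A
      exact this.2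
    have hq0ne : q₀.1 ≠ q₀.2 := ne_of_lt hq0lt
    have hsdiff : allPairs k \ t = insert q₀ (allPairs k \ insert q₀ t) := by
      ext q
      simp only [Finset.mem_sdiff, Finset.mem_insert]
      constructor
      · rintro ⟨hqA, hqt⟩
        by_cases hqq : q = q₀
        · exact Or.inl hqq
        · exact Or.inr ⟨hqA, fun h => h.elim (fun h' => hqq h') hqt⟩
      · rintro (rfl | ⟨hqA, hqi⟩)
        · exact ⟨hq0A, hq₀⟩
        · exact ⟨hqA, fun h => hqi (Or.inr h)⟩
    have hq0notin : q₀ ∉ allPairs k \ insert q₀ t := by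
      simp [Finset.mem_sdiff]
    have hdiff :
        (∑ g ∈ Fintype.piFinset X, (∏ q ∈ insert q₀ t, Aind G (g q.1) (g q.2))
          * ∏ q ∈ allPairs k \ insert q₀ t, (G.edgeDensity (W q.1) (W q.2) : ℝ))
        - (∑ g ∈ Fintype.piFinset X, (∏ q ∈ t, Aind G (g q.1) (g q.2))
          * ∏ q ∈ allPairs k \ t, (G.edgeDensity (W q.1) (W q.2) : ℝ))
        = (∏ q ∈ allPairs k \ insert q₀ t, (G.edgeDensity (W q.1) (W q.2) : ℝ))
          * ∑ g ∈ Fintype.piFinset X, (∏ q ∈ t, Aind G (g q.1) (g q.2))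
            * (Aind G (g q₀.1) (g q₀.2) - (G.edgeDensity (W q₀.1) (W q₀.2) : ℝ)) := by
      rw [hsdiff, Finset.prod_insert hq0notin, Finset.mul_sum, ← Finset.sum_sub_distrib]
      refine Finset.sum_congr rfl fun g hg => ?_
      rw [Finset.prod_insert hq₀]
      ring
    have hDle : |∏ q ∈ allPairs k \ insert q₀ t, (G.edgeDensity (W q.1) (W q.2) : ℝ)| ≤ 1 := by
      rw [abs_of_nonneg (Finset.prod_nonneg fun q _ => dens_nonneg G _ _)]
      exact Finset.prod_le_one (fun q _ => dens_nonneg G _ _) (fun q _ => dens_le_one G _ _)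
    have hcruxbd :
        |∑ g ∈ Fintype.piFinset X, (∏ q ∈ t, Aind G (g q.1) (g q.2))
            * (Aind G (g q₀.1) (g q₀.2) - (G.edgeDensity (W q₀.1) (W q₀.2) : ℝ))|
          ≤ ε * ∏ l, ((W l).card : ℝ) := by
      have hΓcond : ∀ q ∈ t, ¬(q.1 = q₀.1 ∧ q.2 = q₀.2) ∧ ¬(q.1 = q₀.2 ∧ q.2 = q₀.1) := by
        intro q hq
        have hqlt : q.1 < q.2 := (Finset.mem_filter.1 (htA hq)).2
        constructor
        · rintro ⟨h1, h2⟩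
          have : q = q₀ := Prod.ext h1 h2
          rw [this] at hq
          exact hq₀ hq
        · rintro ⟨h1, h2⟩
          rw [h1, h2] at hqlt
          exact absurd hq0lt (not_lt_of_gt hqlt)
      have hbd := crux G hε X W hXW hq0ne (hreg _ _ hq0ne) t hΓcond
      refine hbd.trans ?_
      have hXW' : ∏ l ∈ univ \ {q₀.1, q₀.2}, ((X l).card : ℝ)
          ≤ ∏ l ∈ univ \ {q₀.1, q₀.2}, ((W l).card : ℝ) := by
        refine Finset.prod_le_prod (fun l _ => by positivity) (fun l _ => ?_)
        exact_mod_cast Finset.card_le_card (hXW l)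
      have hrecomb : ε * (W q₀.1).card * (W q₀.2).card
            * ∏ l ∈ univ \ {q₀.1, q₀.2}, ((W l).card : ℝ)
          = ε * ∏ l, ((W l).card : ℝ) := by
        rw [← Finset.prod_sdiff (subset_univ ({q₀.1, q₀.2} : Finset (Fin k)))]
        rw [Finset.prod_pair hq0ne]
        ring
      calc ε * (W q₀.1).card * (W q₀.2).card * ∏ l ∈ univ \ {q₀.1, q₀.2}, ((X l).card : ℝ)
          ≤ ε * (W q₀.1).card * (W q₀.2).card
            * ∏ l ∈ univ \ {q₀.1, q₀.2}, ((W l).card : ℝ) := by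
            refine mul_le_mul_of_nonneg_left hXW' (by positivity)
        _ = ε * ∏ l, ((W l).card : ℝ) := hrecomb
    have htri := abs_sub_abs_le_abs_sub (0:ℝ) (0:ℝ)
    have h1 := ih htA
    calc |(∑ g ∈ Fintype.piFinset X, (∏ q ∈ insert q₀ t, Aind G (g q.1) (g q.2))
          * ∏ q ∈ allPairs k \ insert q₀ t, (G.edgeDensity (W q.1) (W q.2) : ℝ))
        - (∑ g ∈ Fintype.piFinset X, (∏ q ∈ (∅ : Finset (Fin k × Fin k)), Aind G (g q.1) (g q.2))
          * ∏ q ∈ allPairs k \ (∅ : Finset (Fin k × Fin k)), (G.edgeDensity (W q.1) (W q.2) : ℝ))|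
        ≤ |(∑ g ∈ Fintype.piFinset X, (∏ q ∈ insert q₀ t, Aind G (g q.1) (g q.2))
          * ∏ q ∈ allPairs k \ insert q₀ t, (G.edgeDensity (W q.1) (W q.2) : ℝ))
          - (∑ g ∈ Fintype.piFinset X, (∏ q ∈ t, Aind G (g q.1) (g q.2))
          * ∏ q ∈ allPairs k \ t, (G.edgeDensity (W q.1) (W q.2) : ℝ))|
          + |(∑ g ∈ Fintype.piFinset X, (∏ q ∈ t, Aind G (g q.1) (g q.2))
          * ∏ q ∈ allPairs k \ t, (G.edgeDensity (W q.1) (W q.2) : ℝ))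
          - (∑ g ∈ Fintype.piFinset X, (∏ q ∈ (∅ : Finset (Fin k × Fin k)), Aind G (g q.1) (g q.2))
          * ∏ q ∈ allPairs k \ (∅ : Finset (Fin k × Fin k)), (G.edgeDensity (W q.1) (W q.2) : ℝ))| :=
          abs_sub_le _ _ _
      _ ≤ ε * ∏ l, ((W l).card : ℝ) + t.card * (ε * ∏ l, ((W l).card : ℝ)) := by
          refine add_le_add ?_ h1
          rw [hdiff, abs_mul]
          have hnn := abs_nonneg (∑ g ∈ Fintype.piFinset X, (∏ q ∈ t, Aind G (g q.1) (g q.2))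
            * (Aind G (g q₀.1) (g q₀.2) - (G.edgeDensity (W q₀.1) (W q₀.2) : ℝ)))
          calc |∏ q ∈ allPairs k \ insert q₀ t, (G.edgeDensity (W q.1) (W q.2) : ℝ)| * _
              ≤ 1 * _ := mul_le_mul_of_nonneg_right hDle hnn
            _ = _ := one_mul _
            _ ≤ ε * ∏ l, ((W l).card : ℝ) := hcruxbd
      _ = (insert q₀ t).card * (ε * ∏ l, ((W l).card : ℝ)) := by
          rw [Finset.card_insert_of_notMem hq₀]
          push_cast
          ring

lemma count {k : ℕ} {ε : ℝ} (hε : 0 < ε) (X W : Fin k → Finset V)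
    (hXW : ∀ l, X l ⊆ W l)
    (hreg : ∀ i j, i ≠ j → G.IsUniform ε (W i) (W j)) :
    |(∑ g ∈ Fintype.piFinset X, ∏ q ∈ allPairs k, Aind G (g q.1) (g q.2))
      - (∏ q ∈ allPairs k, (G.edgeDensity (W q.1) (W q.2) : ℝ)) * ∏ l, ((X l).card : ℝ)|
      ≤ (allPairs k).card * (ε * ∏ l, ((W l).card : ℝ)) := by
  have h := count_aux G hε X W hXW hreg (allPairs k) (subset_refl _)
  simp only [Finset.sdiff_self, Finset.prod_empty, one_mul, Finset.sum_const,
    Finset.sdiff_empty, nsmul_eq_mul, Fintype.card_piFinset] at h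
  have hXcast : ((∏ l, (X l).card : ℕ) : ℝ) = ∏ l, ((X l).card : ℝ) := by push_cast; rfl
  rw [hXcast] at h
  rw [mul_comm (∏ q ∈ allPairs k, (G.edgeDensity (W q.1) (W q.2) : ℝ)) (∏ l, ((X l).card : ℝ))]
  simpa using h


lemma mem_allPairs {k : ℕ} (q : Fin k × Fin k) : q ∈ allPairs k ↔ q.1 < q.2 := by
  simp [allPairs]


lemma final_arith (δ P mU mX E NU NX : ℝ) (hδ0 : 0 < δ) (hδ1 : δ < 1)
    (hmU0 : 0 < mU) (hmX0 : 0 ≤ mX) (hmXle : mX ≤ mU) (hP : δ ≤ P)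
    (hE0 : 0 ≤ E) (hEle : E ≤ δ ^ 3 * mU) (hNX0 : 0 ≤ NX)
    (hNUub : NU ≤ P * mU + E) (hNUlb : P * mU - E ≤ NU) (hNXlb : P * mX - E ≤ NX) :
    0 < NU ∧ (mX / mU - 4 * δ) * NU ≤ NX := by
  have h2 : δ * δ < 1 := by nlinarith
  have hd3' : δ ^ 3 < δ := by nlinarith [mul_lt_mul_of_pos_left h2 hδ0]
  have hPmU : δ * mU ≤ P * mU := mul_le_mul_of_nonneg_right hP hmU0.le
  have hd3 : δ ^ 3 * mU < δ * mU := mul_lt_mul_of_pos_right hd3' hmU0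
  have hNU0 : 0 < NU := by linarith
  refine ⟨hNU0, ?_⟩
  by_cases hcase : mX / mU - 4 * δ ≤ 0
  · have h3 : (mX / mU - 4 * δ) * NU ≤ 0 := mul_nonpos_of_nonpos_of_nonneg hcase hNU0.le
    linarith
  · push_neg at hcase
    set t := mX / mU with hT
    have ht : mX = t * mU := by rw [hT]; field_simp
    have ht1 : t ≤ 1 := by rw [hT]; exact (div_le_one hmU0).2 hmXle
    have ht0 : 0 ≤ t := by positivity
    have step1 : (t - 4 * δ) * NU ≤ (t - 4 * δ) * (P * mU + E) :=
      mul_le_mul_of_nonneg_left hNUub hcase.le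
    have step2 : (t - 4 * δ) * (P * mU + E) ≤ P * (t * mU) - E := by
      have f1 : (1 - t) * E ≥ 0 := mul_nonneg (by linarith) hE0
      have f2 : δ * E ≥ 0 := mul_nonneg hδ0.le hE0
      have f3 : δ * ((P - δ) * mU) ≥ 0 :=
        mul_nonneg hδ0.le (mul_nonneg (by linarith) hmU0.le)
      have f5 : δ ^ 2 * mU * (2 - δ) ≥ 0 := by nlinarith [sq_nonneg δ, hmU0]
      nlinarith [f1, f2, f3, f5, hEle]
    rw [← ht] at step2
    linarith
lemma pairs_iff {k : ℕ} (g : Fin k → V) :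
    (∀ i j, i ≠ j → G.Adj (g i) (g j)) ↔ ∀ q ∈ allPairs k, G.Adj (g q.1) (g q.2) := by
  constructor
  · intro h q hq
    exact h _ _ (ne_of_lt ((mem_allPairs q).1 hq))
  · intro h i j hij
    rcases lt_or_gt_of_ne hij with hlt | hgt
    · exact h (i, j) ((mem_allPairs _).2 hlt)
    · exact (h (j, i) ((mem_allPairs _).2 hgt)).symm

lemma card_bridge {k : ℕ} (Y : Fin k → Finset V) (p : (Fin k → V) → Prop)
    [DecidablePred p]
    (hp : ∀ g, p g ↔ (∀ i, g i ∈ Y i) ∧ ∀ q ∈ allPairs k, G.Adj (g q.1) (g q.2)) :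
    ((Finset.univ.filter p).card : ℝ)
      = ∑ g ∈ Fintype.piFinset Y, ∏ q ∈ allPairs k, Aind G (g q.1) (g q.2) := by
  classical
  have hsummand : ∀ g ∈ Fintype.piFinset Y, ∏ q ∈ allPairs k, Aind G (g q.1) (g q.2)
      = if (∀ q ∈ allPairs k, G.Adj (g q.1) (g q.2)) then (1:ℝ) else 0 := by
    intro g _
    unfold Aind
    rw [Finset.prod_boole]
    split_ifs <;> tauto
  have hsets : Finset.univ.filter p
      = (Fintype.piFinset Y).filter (fun g => ∀ q ∈ allPairs k, G.Adj (g q.1) (g q.2)) := by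
    ext g
    simp only [Finset.mem_filter, Fintype.mem_piFinset, Finset.mem_univ, true_and]
    rw [hp g]
  rw [Finset.sum_congr rfl hsummand, Finset.sum_boole, hsets]

end CFW

open CFW

/-- Corollary 2.6 of Conlon–Fox–Wigderson: if `ε ≤ δ³/k²`, all pairs `(U_i,U_j)` are
`ε`-regular and the product of their densities is at least `δ`, then for any vertex `u`,
a uniformly random copy `Q` of `K_k` with one vertex in each `U_i` is extended by `u`
(i.e. `u` is adjacent to every vertex of `Q`) with probability at least
`∏ d(u,U_i) − 4δ`. -/
theorem random_clique_extension {V : Type*} [Fintype V] [DecidableEq V]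
    (G : SimpleGraph V) [DecidableRel G.Adj] (k : ℕ) (hk : 1 ≤ k) (ε δ : ℝ)
    (hε : ε ∈ Set.Ioo (0 : ℝ) 1) (hδ : δ ∈ Set.Ioo (0 : ℝ) 1)
    (hεδ : ε ≤ δ ^ 3 / (k : ℝ) ^ 2) (U : Fin k → Finset V)
    (hreg : ∀ i j, i ≠ j → G.IsUniform ε (U i) (U j))
    (hdens : δ ≤ ∏ q ∈ Finset.univ.filter (fun q : Fin k × Fin k => q.1 < q.2),
      ((G.edgeDensity (U q.1) (U q.2) : ℝ)))
    (u : V) :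
    ((Finset.univ.filter (fun f : Fin k → V => (∀ i, f i ∈ U i) ∧
        (∀ i j, i ≠ j → G.Adj (f i) (f j)) ∧ ∀ i, G.Adj u (f i))).card : ℝ) /
      ((Finset.univ.filter (fun f : Fin k → V => (∀ i, f i ∈ U i) ∧
        ∀ i j, i ≠ j → G.Adj (f i) (f j))).card : ℝ) ≥
      (∏ i, (((U i).filter (G.Adj u)).card : ℝ) / ((U i).card : ℝ)) - 4 * δ := by
  classical
  obtain ⟨hε0, hε1⟩ := hε
  obtain ⟨hδ0, hδ1⟩ := hδ
  by_cases hne : ∀ i, (U i).Nonempty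
  swap
  · push_neg at hne
    obtain ⟨i, hi⟩ := hne
    have hden0 : (Finset.univ.filter (fun f : Fin k → V => (∀ i, f i ∈ U i) ∧
        ∀ i j, i ≠ j → G.Adj (f i) (f j))) = ∅ := by
      rw [Finset.filter_eq_empty_iff]
      rintro f _
      rintro ⟨hf, -⟩
      have := hf i
      rw [hi] at this
      exact absurd this (Finset.notMem_empty _)
    have hprod0 : ∏ i', (((U i').filter (G.Adj u)).card : ℝ) / ((U i').card : ℝ) = 0 := by
      refine Finset.prod_eq_zero (Finset.mem_univ i) ?_
      rw [hi]
      simp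
    rw [hden0, hprod0]
    simp only [Finset.card_empty, Nat.cast_zero, div_zero, ge_iff_le, zero_sub]
    linarith
  -- main case
  have hU0 : ∀ i, 0 < ((U i).card : ℝ) := fun i => by
    exact_mod_cast Finset.card_pos.2 (hne i)
  have hPδ : δ ≤ ∏ q ∈ allPairs k, (G.edgeDensity (U q.1) (U q.2) : ℝ) := hdens
  have hcU := count G hε0 U U (fun l => subset_rfl) hreg
  have hcX := count G hε0 (fun i => (U i).filter (G.Adj u)) U
    (fun l => Finset.filter_subset _ _) hreg
  set P := ∏ q ∈ allPairs k, (G.edgeDensity (U q.1) (U q.2) : ℝ) with hP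
  set mU := ∏ l, ((U l).card : ℝ) with hmU
  set mX := ∏ l, ((((U l).filter (G.Adj u)).card : ℝ)) with hmX
  set NU := ∑ g ∈ Fintype.piFinset U, ∏ q ∈ allPairs k, Aind G (g q.1) (g q.2) with hNU
  set NX := ∑ g ∈ Fintype.piFinset (fun i => (U i).filter (G.Adj u)),
    ∏ q ∈ allPairs k, Aind G (g q.1) (g q.2) with hNX
  set E := ((allPairs k).card : ℝ) * (ε * mU) with hE
  -- bridges
  have hbrD : ((Finset.univ.filter (fun f : Fin k → V => (∀ i, f i ∈ U i) ∧
      ∀ i j, i ≠ j → G.Adj (f i) (f j))).card : ℝ) = NU := by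
    rw [hNU]
    refine card_bridge G U _ fun g => ?_
    rw [← pairs_iff G g]
  have hbrN : ((Finset.univ.filter (fun f : Fin k → V => (∀ i, f i ∈ U i) ∧
      (∀ i j, i ≠ j → G.Adj (f i) (f j)) ∧ ∀ i, G.Adj u (f i))).card : ℝ) = NX := by
    rw [hNX]
    refine card_bridge G (fun i => (U i).filter (G.Adj u)) _ fun g => ?_
    rw [← pairs_iff G g]
    constructor
    · rintro ⟨h1, h2, h3⟩
      exact ⟨fun i => Finset.mem_filter.2 ⟨h1 i, h3 i⟩, h2⟩
    · rintro ⟨h1, h2⟩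
      exact ⟨fun i => (Finset.mem_filter.1 (h1 i)).1, h2,
        fun i => (Finset.mem_filter.1 (h1 i)).2⟩
  -- basic facts
  have hmU0 : 0 < mU := Finset.prod_pos fun l _ => hU0 l
  have hmX0 : 0 ≤ mX := Finset.prod_nonneg fun l _ => by positivity
  have hmXle : mX ≤ mU := by
    refine Finset.prod_le_prod (fun l _ => by positivity) (fun l _ => ?_)
    exact_mod_cast Finset.card_le_card (Finset.filter_subset _ _)
  have hP1 : P ≤ 1 :=
    Finset.prod_le_one (fun q _ => dens_nonneg G _ _) (fun q _ => dens_le_one G _ _)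
  have hE0 : 0 ≤ E := by positivity
  have hEle : E ≤ δ ^ 3 * mU := by
    have hk0 : (0:ℝ) < (k:ℝ) ^ 2 := by
      have : (0:ℝ) < (k:ℝ) := by exact_mod_cast hk
      positivity
    have hAPcard : ((allPairs k).card : ℝ) ≤ (k:ℝ) ^ 2 := by
      have h1 : (allPairs k).card ≤ k * k := by
        calc (allPairs k).card ≤ (Finset.univ : Finset (Fin k × Fin k)).card :=
              Finset.card_le_card (Finset.filter_subset _ _)
          _ = k * k := by simp [Finset.card_univ]
      calc ((allPairs k).card : ℝ) ≤ ((k * k : ℕ) : ℝ) := by exact_mod_cast h1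
        _ = (k:ℝ) ^ 2 := by push_cast; ring
    have h2 : ((allPairs k).card : ℝ) * ε ≤ δ ^ 3 := by
      calc ((allPairs k).card : ℝ) * ε ≤ (k:ℝ) ^ 2 * (δ ^ 3 / (k:ℝ) ^ 2) := by
            exact mul_le_mul hAPcard hεδ hε0.le (by positivity)
        _ = δ ^ 3 := by field_simp
    calc E = (((allPairs k).card : ℝ) * ε) * mU := by rw [hE]; ring
      _ ≤ δ ^ 3 * mU := mul_le_mul_of_nonneg_right h2 hmU0.le
  have hNX0 : 0 ≤ NX :=
    Finset.sum_nonneg fun g _ => Finset.prod_nonneg fun q _ => Aind_nonneg G _ _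
  have hcU' := abs_le.1 hcU
  have hcX' := abs_le.1 hcX
  have hNUub : NU ≤ P * mU + E := by linarith [hcU'.2]
  have hNUlb : P * mU - E ≤ NU := by linarith [hcU'.1]
  have hNXlb : P * mX - E ≤ NX := by linarith [hcX'.1]
  obtain ⟨hNU0, hfin⟩ := final_arith δ P mU mX E NU NX hδ0 hδ1 hmU0 hmX0 hmXle hPδ
    hE0 hEle hNX0 hNUub hNUlb hNXlb
  rw [hbrD, hbrN, Finset.prod_div_distrib, ← hmX, ← hmU, ge_iff_le]
  rw [le_div_iff₀ hNU0]
  calc (mX / mU - 4 * δ) * NU ≤ NX := hfin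
end

section
/- Suppose V_1, ..., V_k are (not necessarily distinct) vertex subsets of a graph G such that all pairs (V_i, V_j) are ε-regular. Then the number of labeled copies of K_k whose i-th vertex lies in V_i for all i is at least (∏_{1≤i<j≤k} d(V_i,V_j) − ε·C(k,2)) · ∏_{i=1}^k |V_i|. -/
open Finset

section Aux


lemma my_prod_split_two {ι M : Type*} [Fintype ι] [DecidableEq ι] [CommMonoid M]
    {i j : ι} (hij : i ≠ j) (h : ι → M) :
    ∏ m, h m = h i * (h j * ∏ m : {m : ι // m ≠ i ∧ m ≠ j}, h m.1) := by
  rw [← Finset.mul_prod_erase univ h (mem_univ i),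
    ← Finset.mul_prod_erase _ h (by simp [hij.symm] : j ∈ univ.erase i)]
  congr 2
  rw [← Finset.prod_subtype ((univ.erase i).erase j)
    (p := fun m => m ≠ i ∧ m ≠ j) (fun m => by simp [and_comm]) h]

lemma my_card_pairs (k : ℕ) :
    (univ.filter (fun q : Fin k × Fin k => q.1 < q.2)).card = k.choose 2 := by
  have hswap : (univ.filter (fun q : Fin k × Fin k => q.1 < q.2)).card
      = (univ.filter (fun q : Fin k × Fin k => q.2 < q.1)).card := by
    apply Finset.card_bij (fun q _ => (q.2, q.1))
    · intro q hq; simp only [mem_filter, mem_univ, true_and] at *; exact hq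
    · intro a ha b hb hab
      simp only [Prod.mk.injEq] at hab
      exact Prod.ext hab.2 hab.1
    · intro q hq; exact ⟨(q.2, q.1), by simp only [mem_filter, mem_univ, true_and] at *; exact hq, rfl⟩
  have hunion : (univ.filter (fun q : Fin k × Fin k => q.1 < q.2)) ∪
      (univ.filter (fun q : Fin k × Fin k => q.2 < q.1)) = univ.offDiag := by
    rw [← Finset.filter_or]
    ext q
    simp only [mem_filter, mem_univ, true_and, Finset.mem_offDiag]
    exact ne_iff_lt_or_gt.symm
  have hdisj : Disjoint (univ.filter (fun q : Fin k × Fin k => q.1 < q.2))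
      (univ.filter (fun q : Fin k × Fin k => q.2 < q.1)) := by
    rw [Finset.disjoint_left]
    intro q hq1 hq2
    simp only [mem_filter, mem_univ, true_and] at hq1 hq2
    exact absurd hq2 (lt_asymm hq1)
  have hcard : ((univ : Finset (Fin k)).offDiag.card : ℕ) = k * k - k := by
    rw [Finset.offDiag_card]; simp
  have h2 : 2 * (univ.filter (fun q : Fin k × Fin k => q.1 < q.2)).card = k * k - k := by
    rw [← hcard, ← hunion, Finset.card_union_of_disjoint hdisj, ← hswap]; ring
  have h3 : k * k - k = k * (k - 1) := by cases k <;> simp [Nat.mul_sub_one] <;> ring_nf <;> omega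
  rw [Nat.choose_two_right]
  omega



lemma my_cut_bound {V : Type*} [Fintype V] [DecidableEq V] (G : SimpleGraph V)
    [DecidableRel G.Adj] {ε : ℝ} (hε : 0 < ε) {s t : Finset V} (hU : G.IsUniform ε s t)
    {A B : Finset V} (hA : A ⊆ s) (hB : B ⊆ t) :
    |∑ x ∈ A, ∑ y ∈ B, ((if G.Adj x y then (1:ℝ) else 0) - (G.edgeDensity s t : ℝ))|
      ≤ ε * (s.card * t.card) := by
  have hsum : ∑ x ∈ A, ∑ y ∈ B, (if G.Adj x y then (1:ℝ) else 0)
      = ((Rel.interedges G.Adj A B).card : ℝ) := by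
    rw [Rel.interedges, Finset.card_filter]
    push_cast
    rw [Finset.sum_product]
  have he : ((Rel.interedges G.Adj A B).card : ℝ)
      = (G.edgeDensity A B : ℝ) * (A.card * B.card) := by
    rcases eq_or_ne ((A.card : ℝ) * B.card) 0 with h0 | h0
    · have : (Rel.interedges G.Adj A B).card = 0 := by
        rcases mul_eq_zero.1 h0 with h | h
        · have : A = ∅ := card_eq_zero.1 (by exact_mod_cast h)
          subst this; simp [Rel.interedges]
        · have : B = ∅ := card_eq_zero.1 (by exact_mod_cast h)
          subst this; simp [Rel.interedges]
      rw [this, h0]; simp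
    · have : (G.edgeDensity A B : ℝ)
          = ((Rel.interedges G.Adj A B).card : ℝ) / (A.card * B.card) := by
        rw [SimpleGraph.edgeDensity, Rel.edgeDensity]
        push_cast
        ring
      rw [this, div_mul_cancel₀ _ h0]
  have h01 : ∀ (a b : Finset V), (0:ℝ) ≤ (G.edgeDensity a b : ℝ) ∧ (G.edgeDensity a b : ℝ) ≤ 1 :=
    fun a b => ⟨by exact_mod_cast G.edgeDensity_nonneg a b,
      by exact_mod_cast G.edgeDensity_le_one a b⟩
  have key : ∑ x ∈ A, ∑ y ∈ B, ((if G.Adj x y then (1:ℝ) else 0) - (G.edgeDensity s t : ℝ))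
      = ((G.edgeDensity A B : ℝ) - (G.edgeDensity s t : ℝ)) * (A.card * B.card) := by
    simp only [Finset.sum_sub_distrib, Finset.sum_const, nsmul_eq_mul]
    rw [hsum, he]; ring
  rw [key, abs_mul, abs_of_nonneg (by positivity : (0:ℝ) ≤ (A.card : ℝ) * B.card)]
  have hAs : (A.card : ℝ) ≤ s.card := by exact_mod_cast card_le_card hA
  have hBt : (B.card : ℝ) ≤ t.card := by exact_mod_cast card_le_card hB
  by_cases hA2 : (s.card : ℝ) * ε ≤ A.card
  · by_cases hB2 : (t.card : ℝ) * ε ≤ B.card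
    · have := hU hA hB hA2 hB2
      have h1 : |(G.edgeDensity A B : ℝ) - (G.edgeDensity s t : ℝ)| ≤ ε := le_of_lt this
      calc |(G.edgeDensity A B : ℝ) - (G.edgeDensity s t : ℝ)| * ((A.card : ℝ) * B.card)
          ≤ ε * ((A.card : ℝ) * B.card) := by
            apply mul_le_mul_of_nonneg_right h1 (by positivity)
        _ ≤ ε * ((s.card : ℝ) * t.card) := by
            apply mul_le_mul_of_nonneg_left _ hε.le
            exact mul_le_mul hAs hBt (by positivity) (by positivity)
    · push_neg at hB2
      have habs : |(G.edgeDensity A B : ℝ) - (G.edgeDensity s t : ℝ)| ≤ 1 := by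
        rw [abs_sub_le_iff]
        obtain ⟨h1, h2⟩ := h01 A B
        obtain ⟨h3, h4⟩ := h01 s t
        constructor <;> linarith
      calc |(G.edgeDensity A B : ℝ) - (G.edgeDensity s t : ℝ)| * ((A.card : ℝ) * B.card)
          ≤ 1 * ((A.card : ℝ) * B.card) := mul_le_mul_of_nonneg_right habs (by positivity)
        _ = (A.card : ℝ) * B.card := one_mul _
        _ ≤ (s.card : ℝ) * ((t.card : ℝ) * ε) := by
            apply mul_le_mul hAs hB2.le (by positivity) (by positivity)
        _ = ε * ((s.card : ℝ) * t.card) := by ring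
  · push_neg at hA2
    have habs : |(G.edgeDensity A B : ℝ) - (G.edgeDensity s t : ℝ)| ≤ 1 := by
      rw [abs_sub_le_iff]
      obtain ⟨h1, h2⟩ := h01 A B
      obtain ⟨h3, h4⟩ := h01 s t
      constructor <;> linarith
    calc |(G.edgeDensity A B : ℝ) - (G.edgeDensity s t : ℝ)| * ((A.card : ℝ) * B.card)
        ≤ 1 * ((A.card : ℝ) * B.card) := mul_le_mul_of_nonneg_right habs (by positivity)
      _ = (A.card : ℝ) * B.card := one_mul _
      _ ≤ ((s.card : ℝ) * ε) * t.card := by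
          apply mul_le_mul hA2.le hBt (by positivity) (by positivity)
      _ = ε * ((s.card : ℝ) * t.card) := by ring

end Aux

/-- The counting lemma: if all pairs `(V_i, V_j)` are `ε`-regular, then the number of labeled
copies of `K_k` with the `i`-th vertex in `V_i` is at least
`(∏_{i<j} d(V_i,V_j) − ε·C(k,2))·∏ |V_i|`. -/
theorem clique_counting_lemma {V : Type*} [Fintype V] [DecidableEq V]
    (G : SimpleGraph V) [DecidableRel G.Adj] (k : ℕ) (ε : ℝ) (hε : 0 < ε)
    (W : Fin k → Finset V)
    (hreg : ∀ i j, i ≠ j → G.IsUniform ε (W i) (W j)) :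
    ((Finset.univ.filter (fun f : Fin k → V => (∀ i, f i ∈ W i) ∧
        ∀ i j, i ≠ j → G.Adj (f i) (f j))).card : ℝ) ≥
      ((∏ q ∈ Finset.univ.filter (fun q : Fin k × Fin k => q.1 < q.2),
        ((G.edgeDensity (W q.1) (W q.2) : ℝ))) - ε * (k.choose 2 : ℝ)) *
      ∏ i, ((W i).card : ℝ) := by
  classical
  set P : Finset (Fin k × Fin k) :=
    Finset.univ.filter (fun q : Fin k × Fin k => q.1 < q.2) with hPdef
  set d : Fin k × Fin k → ℝ := fun q => (G.edgeDensity (W q.1) (W q.2) : ℝ) with hd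
  set w : Finset (Fin k × Fin k) → (Fin k × Fin k) → (Fin k → V) → ℝ :=
    fun S q f => if q ∈ S then (if G.Adj (f q.1) (f q.2) then (1:ℝ) else 0) else d q with hw
  set N : Finset (Fin k × Fin k) → ℝ := fun S =>
    ∑ f : Fin k → V, (∏ m, if f m ∈ W m then (1:ℝ) else 0) * ∏ q ∈ P, w S q f with hN
  set Pr : ℝ := ∏ i, ((W i).card : ℝ) with hPr
  have hPr0 : (0:ℝ) ≤ Pr := Finset.prod_nonneg (fun i _ => by positivity)
  have hd01 : ∀ q, 0 ≤ d q ∧ d q ≤ 1 := by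
    intro q
    simp only [hd]
    constructor
    · exact_mod_cast G.edgeDensity_nonneg (W q.1) (W q.2)
    · exact_mod_cast G.edgeDensity_le_one (W q.1) (W q.2)
  have hw01 : ∀ S q f, 0 ≤ w S q f ∧ w S q f ≤ 1 := by
    intro S q f
    simp only [hw]
    split_ifs with h1 h2
    · exact ⟨zero_le_one, le_refl 1⟩
    · exact ⟨le_refl 0, zero_le_one⟩
    · exact hd01 q
  -- Step A : N P is the clique count
  have hNP : ((Finset.univ.filter (fun f : Fin k → V => (∀ i, f i ∈ W i) ∧
      ∀ i j, i ≠ j → G.Adj (f i) (f j))).card : ℝ) = N P := by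
    rw [Finset.card_filter, hN]
    push_cast
    refine Finset.sum_congr rfl (fun f _ => ?_)
    by_cases hc : (∀ i, f i ∈ W i) ∧ ∀ i j, i ≠ j → G.Adj (f i) (f j)
    · rw [if_pos hc]
      have e1 : (∏ m, if f m ∈ W m then (1:ℝ) else 0) = 1 := by
        rw [Finset.prod_congr rfl (fun m _ => if_pos (hc.1 m)), Finset.prod_const_one]
      have e2 : (∏ q ∈ P, w P q f) = 1 := by
        rw [Finset.prod_congr rfl (fun q hq => ?_), Finset.prod_const_one]
        have hlt : q.1 < q.2 := by
          rw [hPdef] at hq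
          exact (Finset.mem_filter.1 hq).2
        simp only [hw, if_pos hq]
        rw [if_pos (hc.2 q.1 q.2 (ne_of_lt hlt))]
      rw [e1, e2, one_mul]
    · rw [if_neg hc]
      rw [not_and_or] at hc
      rcases hc with hc | hc
      · push_neg at hc
        obtain ⟨m, hm⟩ := hc
        have : (∏ m, if f m ∈ W m then (1:ℝ) else 0) = 0 :=
          Finset.prod_eq_zero (mem_univ m) (if_neg hm)
        rw [this, zero_mul]
      · push_neg at hc
        obtain ⟨a, b, hab, hnadj⟩ := hc
        have key : ∃ q ∈ P, ¬ G.Adj (f q.1) (f q.2) := by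
          rcases lt_or_gt_of_ne hab with h | h
          · exact ⟨(a, b), by rw [hPdef]; simp [h], hnadj⟩
          · exact ⟨(b, a), by rw [hPdef]; simp [h], fun hadj => hnadj hadj.symm⟩
        obtain ⟨q, hq, hnadj⟩ := key
        have : (∏ q ∈ P, w P q f) = 0 := by
          refine Finset.prod_eq_zero hq ?_
          simp only [hw, if_pos hq]
          rw [if_neg hnadj]
        rw [this, mul_zero]
  -- Step B : N ∅
  have hN0 : N ∅ = (∏ q ∈ P, d q) * Pr := by
    rw [hN]
    simp only [hw, Finset.notMem_empty, if_false]
    rw [← Finset.sum_mul]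
    rw [show (∑ f : Fin k → V, ∏ m, if f m ∈ W m then (1:ℝ) else 0) = Pr from ?_]
    · ring
    · rw [← Fintype.piFinset_univ]
      have hps := Finset.prod_univ_sum (κ := fun _ : Fin k => V) (t := fun _ => univ)
        (f := fun m x => if x ∈ W m then (1:ℝ) else 0)
      rw [← hps, hPr]
      refine Finset.prod_congr rfl (fun m _ => ?_)
      rw [Finset.sum_boole]
      congr 1
      simp
  -- Step C : key bound
  have my_prod_ind : ∀ {α : Type} (s : Finset α) (pr : α → Prop) (inst : DecidablePred pr)
      (inst2 : Decidable (∀ a ∈ s, pr a)),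
      (∏ a ∈ s, if pr a then (1:ℝ) else 0) = if (∀ a ∈ s, pr a) then (1:ℝ) else 0 := by
    intro α s pr inst inst2
    by_cases h : ∀ a ∈ s, pr a
    · rw [if_pos h, Finset.prod_congr rfl (fun a ha => if_pos (h a ha)),
        Finset.prod_const_one]
    · rw [if_neg h]
      push_neg at h
      obtain ⟨a, ha, hpa⟩ := h
      exact Finset.prod_eq_zero ha (if_neg hpa)
  have hind_sum : ∀ (A : Finset V) (h : V → ℝ),
      (∑ x : V, (if x ∈ A then (1:ℝ) else 0) * h x) = ∑ x ∈ A, h x := by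
    intro A h
    have hh : ∀ x : V, (if x ∈ A then (1:ℝ) else 0) * h x = if x ∈ A then h x else 0 := by
      intro x; split_ifs <;> simp
    rw [Finset.sum_congr rfl (fun x _ => hh x), Finset.sum_ite_mem, Finset.univ_inter]
  have keystep : ∀ p ∈ P, ∀ S ⊆ P, p ∉ S → |N (insert p S) - N S| ≤ ε * Pr := by
    intro p hpP S hSP hpS
    have hij : p.1 < p.2 := by rw [hPdef] at hpP; exact (Finset.mem_filter.1 hpP).2
    set i := p.1 with hi
    set j := p.2 with hj
    have hne : i ≠ j := ne_of_lt hij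
    set T : (Fin k → V) → ℝ := fun f => ((∏ m, if f m ∈ W m then (1:ℝ) else 0) *
            ∏ q ∈ P.erase p, w S q f) *
            ((if G.Adj (f i) (f j) then (1:ℝ) else 0) - d p) with hT
    have hdiff : N (insert p S) - N S = ∑ f : Fin k → V, T f := by
      rw [hN]
      simp only [hT]
      rw [← Finset.sum_sub_distrib]
      refine Finset.sum_congr rfl (fun f _ => ?_)
      rw [← Finset.mul_prod_erase P (fun q => w (insert p S) q f) hpP,
          ← Finset.mul_prod_erase P (fun q => w S q f) hpP]
      have e1 : w (insert p S) p f = (if G.Adj (f i) (f j) then (1:ℝ) else 0) := by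
        simp only [hw, if_pos (Finset.mem_insert_self p S)]; rfl
      have e2 : w S p f = d p := by simp only [hw, if_neg hpS]
      have e3 : ∏ q ∈ P.erase p, w (insert p S) q f = ∏ q ∈ P.erase p, w S q f := by
        refine Finset.prod_congr rfl (fun q hq => ?_)
        have hqp : q ≠ p := (Finset.mem_erase.1 hq).1
        simp only [hw, Finset.mem_insert]
        rw [if_congr (or_iff_right hqp) rfl rfl]
      rw [e1, e2, e3]; ring
    rcases isEmpty_or_nonempty V with hV | hV
    · have hemp : IsEmpty (Fin k → V) := ⟨fun f => IsEmpty.false (f i)⟩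
      have h1 : N (insert p S) - N S = 0 := by
        rw [hdiff, Finset.univ_eq_empty, Finset.sum_empty]
      rw [h1, abs_zero]
      exact mul_nonneg hε.le hPr0
    obtain ⟨v0⟩ := hV
    set Φ : V → V → ({m : Fin k // m ≠ i ∧ m ≠ j} → V) → (Fin k → V) :=
      fun x y g m => if h1 : m = i then x else if h2 : m = j then y
        else g ⟨m, h1, h2⟩ with hΦ
    have he1 : ∀ x y g, Φ x y g i = x := by
      intro x y g; simp [hΦ]
    have he2 : ∀ x y g, Φ x y g j = y := by
      intro x y g; simp [hΦ, hne.symm]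
    have he3 : ∀ x y g m (h1 : m ≠ i) (h2 : m ≠ j), Φ x y g m = g ⟨m, h1, h2⟩ := by
      intro x y g m h1 h2; simp [hΦ, h1, h2]
    have he3' : ∀ x y g (m : {m : Fin k // m ≠ i ∧ m ≠ j}), Φ x y g m.1 = g m := by
      intro x y g m
      rw [he3 x y g m.1 m.2.1 m.2.2]
    have hbij : Function.Bijective
        (fun z : V × V × ({m : Fin k // m ≠ i ∧ m ≠ j} → V) => Φ z.1 z.2.1 z.2.2) := by
      rw [Function.bijective_iff_has_inverse]
      refine ⟨fun f => (f i, f j, fun m => f m.1), ?_, ?_⟩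
      · rintro ⟨x, y, g⟩
        refine Prod.ext ?_ (Prod.ext ?_ ?_)
        · simpa using he1 x y g
        · simpa using he2 x y g
        · funext m
          simpa using he3' x y g m
      · intro f
        funext m
        by_cases h1 : m = i
        · subst h1; exact he1 _ _ _
        · by_cases h2 : m = j
          · subst h2; exact he2 _ _ _
          · exact he3 _ _ _ _ h1 h2
    have hsum_split : (∑ f : Fin k → V, T f)
        = ∑ g : {m : Fin k // m ≠ i ∧ m ≠ j} → V, ∑ x : V, ∑ y : V, T (Φ x y g) := by
      rw [← Fintype.sum_bijective _ hbij (fun z => T (Φ z.1 z.2.1 z.2.2)) T (fun z => rfl)]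
      rw [Fintype.sum_prod_type, Finset.sum_comm, Fintype.sum_prod_type, Finset.sum_comm]
      exact Finset.sum_congr rfl (fun g _ => Finset.sum_comm)
    set CW : ({m : Fin k // m ≠ i ∧ m ≠ j} → V) → ℝ :=
      fun g => ∏ m : {m : Fin k // m ≠ i ∧ m ≠ j}, (if g m ∈ W m.1 then (1:ℝ) else 0) with hCW
    have hCW0 : ∀ g, 0 ≤ CW g := by
      intro g; simp only [hCW]
      exact Finset.prod_nonneg (fun m _ => by positivity)
    have inner_bound : ∀ g : {m : Fin k // m ≠ i ∧ m ≠ j} → V,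
        |∑ x : V, ∑ y : V, T (Φ x y g)|
          ≤ CW g * (ε * (((W i).card : ℝ) * ((W j).card : ℝ))) := by
      intro g
      set f₀ : Fin k → V := Φ v0 v0 g with hf₀
      have hΦf0 : ∀ x y m (h1 : m ≠ i) (h2 : m ≠ j), Φ x y g m = f₀ m := by
        intro x y m h1 h2
        rw [he3 x y g m h1 h2, hf₀, he3 v0 v0 g m h1 h2]
      have hmem : ∀ q ∈ P.erase p, q ≠ p ∧ q.1 < q.2 := by
        intro q hq
        obtain ⟨h1, h2⟩ := Finset.mem_erase.1 hq
        rw [hPdef] at h2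
        exact ⟨h1, (Finset.mem_filter.1 h2).2⟩
      have hoth1 : ∀ q ∈ P.erase p, q.1 = i → q.2 ≠ i ∧ q.2 ≠ j := by
        intro q hq h
        obtain ⟨hqp, hlt⟩ := hmem q hq
        constructor
        · intro hc; rw [h, hc] at hlt; exact lt_irrefl _ hlt
        · intro hc; exact hqp (Prod.ext (h ▸ rfl) (hc ▸ rfl))
      have hoth2 : ∀ q ∈ P.erase p, q.2 = i → q.1 ≠ i ∧ q.1 ≠ j := by
        intro q hq h
        obtain ⟨hqp, hlt⟩ := hmem q hq
        rw [h] at hlt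
        exact ⟨ne_of_lt hlt, ne_of_lt (hlt.trans hij)⟩
      have hoth3 : ∀ q ∈ P.erase p, ¬(q.1 = i ∨ q.2 = i) → q.1 = j → q.2 ≠ i ∧ q.2 ≠ j := by
        intro q hq hni h
        obtain ⟨hqp, hlt⟩ := hmem q hq
        refine ⟨fun hc => hni (Or.inr hc), fun hc => ?_⟩
        rw [h, hc] at hlt; exact lt_irrefl _ hlt
      have hoth4 : ∀ q ∈ P.erase p, ¬(q.1 = i ∨ q.2 = i) → q.2 = j → q.1 ≠ i ∧ q.1 ≠ j := by
        intro q hq hni h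
        obtain ⟨hqp, hlt⟩ := hmem q hq
        refine ⟨fun hc => hni (Or.inl hc), fun hc => ?_⟩
        rw [h] at hlt; rw [hc] at hlt; exact lt_irrefl _ hlt
      have hcoordQi : ∀ q ∈ P.erase p, (q.1 = i ∨ q.2 = i) → ∀ x y,
          Φ x y g q.1 = Function.update f₀ i x q.1 ∧
          Φ x y g q.2 = Function.update f₀ i x q.2 := by
        intro q hq hqi x y
        rcases hqi with h | h
        · obtain ⟨hn1, hn2⟩ := hoth1 q hq h
          exact ⟨by rw [h, he1, Function.update_self],
            by rw [hΦf0 x y q.2 hn1 hn2, Function.update_of_ne hn1]⟩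
        · obtain ⟨hn1, hn2⟩ := hoth2 q hq h
          exact ⟨by rw [hΦf0 x y q.1 hn1 hn2, Function.update_of_ne hn1],
            by rw [h, he1, Function.update_self]⟩
      have hcoordQj : ∀ q ∈ P.erase p, ¬(q.1 = i ∨ q.2 = i) → (q.1 = j ∨ q.2 = j) → ∀ x y,
          Φ x y g q.1 = Function.update f₀ j y q.1 ∧
          Φ x y g q.2 = Function.update f₀ j y q.2 := by
        intro q hq hni hqj x y
        rcases hqj with h | h
        · obtain ⟨hn1, hn2⟩ := hoth3 q hq hni h
          exact ⟨by rw [h, he2, Function.update_self],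
            by rw [hΦf0 x y q.2 hn1 hn2, Function.update_of_ne hn2]⟩
        · obtain ⟨hn1, hn2⟩ := hoth4 q hq hni h
          exact ⟨by rw [hΦf0 x y q.1 hn1 hn2, Function.update_of_ne hn2],
            by rw [h, he2, Function.update_self]⟩
      have hcoordQ0 : ∀ q ∈ P.erase p, ¬(q.1 = i ∨ q.2 = i) → ¬(q.1 = j ∨ q.2 = j) → ∀ x y,
          Φ x y g q.1 = f₀ q.1 ∧ Φ x y g q.2 = f₀ q.2 := by
        intro q hq hni hnj x y
        exact ⟨hΦf0 x y q.1 (fun h => hni (Or.inl h)) (fun h => hnj (Or.inl h)),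
          hΦf0 x y q.2 (fun h => hni (Or.inr h)) (fun h => hnj (Or.inr h))⟩
      set QiS : Finset (Fin k × Fin k) :=
        ((P.erase p).filter (fun q => q.1 = i ∨ q.2 = i)).filter (fun q => q ∈ S) with hQiS
      set QjS : Finset (Fin k × Fin k) :=
        (((P.erase p).filter (fun q => ¬(q.1 = i ∨ q.2 = i))).filter
          (fun q => q.1 = j ∨ q.2 = j)).filter (fun q => q ∈ S) with hQjS
      set A : Finset V := (W i).filter (fun x => ∀ q ∈ QiS,
        G.Adj (Function.update f₀ i x q.1) (Function.update f₀ i x q.2)) with hA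
      set B : Finset V := (W j).filter (fun y => ∀ q ∈ QjS,
        G.Adj (Function.update f₀ j y q.1) (Function.update f₀ j y q.2)) with hB
      set cu : ℝ := ∏ q ∈ ((P.erase p).filter (fun q => q.1 = i ∨ q.2 = i)).filter
        (fun q => ¬ q ∈ S), d q with hcu
      set cv : ℝ := ∏ q ∈ (((P.erase p).filter (fun q => ¬(q.1 = i ∨ q.2 = i))).filter
        (fun q => q.1 = j ∨ q.2 = j)).filter (fun q => ¬ q ∈ S), d q with hcv
      set c0 : ℝ := ∏ q ∈ ((P.erase p).filter (fun q => ¬(q.1 = i ∨ q.2 = i))).filter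
        (fun q => ¬(q.1 = j ∨ q.2 = j)), w S q f₀ with hc0
      have hcu01 : 0 ≤ cu ∧ cu ≤ 1 := by
        constructor
        · exact Finset.prod_nonneg (fun q _ => (hd01 q).1)
        · exact Finset.prod_le_one (fun q _ => (hd01 q).1) (fun q _ => (hd01 q).2)
      have hcv01 : 0 ≤ cv ∧ cv ≤ 1 := by
        constructor
        · exact Finset.prod_nonneg (fun q _ => (hd01 q).1)
        · exact Finset.prod_le_one (fun q _ => (hd01 q).1) (fun q _ => (hd01 q).2)
      have hc001 : 0 ≤ c0 ∧ c0 ≤ 1 := by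
        constructor
        · exact Finset.prod_nonneg (fun q _ => (hw01 S q f₀).1)
        · exact Finset.prod_le_one (fun q _ => (hw01 S q f₀).1) (fun q _ => (hw01 S q f₀).2)
      have hdp : d p = ((G.edgeDensity (W i) (W j) : ℚ) : ℝ) := by
        simp only [hd]; rfl
      -- decomposition of the pair product
      have hqprod : ∀ x y, (∏ q ∈ P.erase p, w S q (Φ x y g))
          = ((if (∀ q ∈ QiS, G.Adj (Function.update f₀ i x q.1)
                (Function.update f₀ i x q.2)) then (1:ℝ) else 0) * cu) *
            (((if (∀ q ∈ QjS, G.Adj (Function.update f₀ j y q.1)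
                (Function.update f₀ j y q.2)) then (1:ℝ) else 0) * cv) * c0) := by
        intro x y
        rw [← Finset.prod_filter_mul_prod_filter_not (P.erase p)
            (fun q => q.1 = i ∨ q.2 = i) (fun q => w S q (Φ x y g)),
          ← Finset.prod_filter_mul_prod_filter_not
            ((P.erase p).filter (fun q => ¬(q.1 = i ∨ q.2 = i)))
            (fun q => q.1 = j ∨ q.2 = j) (fun q => w S q (Φ x y g)),
          ← Finset.prod_filter_mul_prod_filter_not
            ((P.erase p).filter (fun q => q.1 = i ∨ q.2 = i))
            (fun q => q ∈ S) (fun q => w S q (Φ x y g)),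
          ← Finset.prod_filter_mul_prod_filter_not
            (((P.erase p).filter (fun q => ¬(q.1 = i ∨ q.2 = i))).filter
              (fun q => q.1 = j ∨ q.2 = j))
            (fun q => q ∈ S) (fun q => w S q (Φ x y g))]
        have h1 : ∏ q ∈ QiS, w S q (Φ x y g)
            = (if (∀ q ∈ QiS, G.Adj (Function.update f₀ i x q.1)
                (Function.update f₀ i x q.2)) then (1:ℝ) else 0) := by
          have e : ∀ q ∈ QiS, w S q (Φ x y g) = if G.Adj (Function.update f₀ i x q.1)
              (Function.update f₀ i x q.2) then (1:ℝ) else 0 := by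
            intro q hq
            rw [hQiS] at hq
            have hq2 := Finset.mem_filter.1 hq
            have hq3 := Finset.mem_filter.1 hq2.1
            obtain ⟨hc1, hc2⟩ := hcoordQi q hq3.1 hq3.2 x y
            simp only [hw, if_pos hq2.2]
            rw [hc1, hc2]
          rw [Finset.prod_congr rfl e, my_prod_ind QiS _ _ _]
        have h2 : ∏ q ∈ ((P.erase p).filter (fun q => q.1 = i ∨ q.2 = i)).filter
            (fun q => ¬ q ∈ S), w S q (Φ x y g) = cu := by
          rw [hcu]
          refine Finset.prod_congr rfl (fun q hq => ?_)
          simp only [hw, if_neg (Finset.mem_filter.1 hq).2]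
        have h3 : ∏ q ∈ QjS, w S q (Φ x y g)
            = (if (∀ q ∈ QjS, G.Adj (Function.update f₀ j y q.1)
                (Function.update f₀ j y q.2)) then (1:ℝ) else 0) := by
          have e : ∀ q ∈ QjS, w S q (Φ x y g) = if G.Adj (Function.update f₀ j y q.1)
              (Function.update f₀ j y q.2) then (1:ℝ) else 0 := by
            intro q hq
            rw [hQjS] at hq
            have hq2 := Finset.mem_filter.1 hq
            have hq3 := Finset.mem_filter.1 hq2.1
            have hq4 := Finset.mem_filter.1 hq3.1
            obtain ⟨hc1, hc2⟩ := hcoordQj q hq4.1 hq4.2 hq3.2 x y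
            simp only [hw, if_pos hq2.2]
            rw [hc1, hc2]
          rw [Finset.prod_congr rfl e, my_prod_ind QjS _ _ _]
        have h4 : ∏ q ∈ (((P.erase p).filter (fun q => ¬(q.1 = i ∨ q.2 = i))).filter
            (fun q => q.1 = j ∨ q.2 = j)).filter (fun q => ¬ q ∈ S), w S q (Φ x y g) = cv := by
          rw [hcv]
          refine Finset.prod_congr rfl (fun q hq => ?_)
          simp only [hw, if_neg (Finset.mem_filter.1 hq).2]
        have h5 : ∏ q ∈ ((P.erase p).filter (fun q => ¬(q.1 = i ∨ q.2 = i))).filter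
            (fun q => ¬(q.1 = j ∨ q.2 = j)), w S q (Φ x y g) = c0 := by
          rw [hc0]
          refine Finset.prod_congr rfl (fun q hq => ?_)
          have hq2 := Finset.mem_filter.1 hq
          have hq3 := Finset.mem_filter.1 hq2.1
          obtain ⟨hc1, hc2⟩ := hcoordQ0 q hq3.1 hq3.2 hq2.2 x y
          simp only [hw]
          rw [hc1, hc2]
        rw [← hQiS] at *
        rw [← hQjS] at *
        rw [h1, h2, h3, h4, h5]
      have hdecomp : ∀ x y, T (Φ x y g)
          = (CW g * (c0 * (cu * cv))) * ((if x ∈ A then (1:ℝ) else 0) *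
            ((if y ∈ B then (1:ℝ) else 0) *
              ((if G.Adj x y then (1:ℝ) else 0) - d p))) := by
        intro x y
        have hv : (∏ m, if Φ x y g m ∈ W m then (1:ℝ) else 0)
            = (if x ∈ W i then (1:ℝ) else 0) * ((if y ∈ W j then (1:ℝ) else 0) * CW g) := by
          rw [my_prod_split_two hne (fun m => if Φ x y g m ∈ W m then (1:ℝ) else 0)]
          rw [he1, he2]
          simp only [hCW]
          congr 2
          refine Finset.prod_congr rfl (fun m _ => ?_)
          rw [he3' x y g m]
        have hxA : ∀ x : V, (if x ∈ W i then (1:ℝ) else 0) *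
            (if (∀ q ∈ QiS, G.Adj (Function.update f₀ i x q.1)
              (Function.update f₀ i x q.2)) then (1:ℝ) else 0)
            = (if x ∈ A then (1:ℝ) else 0) := by
          intro x'
          by_cases h1 : x' ∈ W i
          · by_cases h2 : ∀ q ∈ QiS, G.Adj (Function.update f₀ i x' q.1)
                (Function.update f₀ i x' q.2)
            · have hmA : x' ∈ A := by rw [hA]; exact Finset.mem_filter.2 ⟨h1, h2⟩
              rw [if_pos h1, if_pos h2, if_pos hmA]; norm_num
            · have hnA : x' ∉ A := by
                rw [hA]; exact fun hc => h2 (Finset.mem_filter.1 hc).2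
              rw [if_neg h2, if_neg hnA]; norm_num
          · have hnA : x' ∉ A := by
              rw [hA]; exact fun hc => h1 (Finset.mem_filter.1 hc).1
            rw [if_neg h1, if_neg hnA]; norm_num
        have hyB : ∀ y : V, (if y ∈ W j then (1:ℝ) else 0) *
            (if (∀ q ∈ QjS, G.Adj (Function.update f₀ j y q.1)
              (Function.update f₀ j y q.2)) then (1:ℝ) else 0)
            = (if y ∈ B then (1:ℝ) else 0) := by
          intro y'
          by_cases h1 : y' ∈ W j
          · by_cases h2 : ∀ q ∈ QjS, G.Adj (Function.update f₀ j y' q.1)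
                (Function.update f₀ j y' q.2)
            · have hmB : y' ∈ B := by rw [hB]; exact Finset.mem_filter.2 ⟨h1, h2⟩
              rw [if_pos h1, if_pos h2, if_pos hmB]; norm_num
            · have hnB : y' ∉ B := by
                rw [hB]; exact fun hc => h2 (Finset.mem_filter.1 hc).2
              rw [if_neg h2, if_neg hnB]; norm_num
          · have hnB : y' ∉ B := by
              rw [hB]; exact fun hc => h1 (Finset.mem_filter.1 hc).1
            rw [if_neg h1, if_neg hnB]; norm_num
        simp only [hT]
        rw [he1, he2, hv, hqprod x y, ← hxA x, ← hyB y]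
        ring
      have hsum2 : (∑ x : V, ∑ y : V, T (Φ x y g))
          = (CW g * (c0 * (cu * cv))) *
            (∑ x ∈ A, ∑ y ∈ B, ((if G.Adj x y then (1:ℝ) else 0) - d p)) := by
        have hx : ∀ x : V, (∑ y : V, T (Φ x y g))
            = (CW g * (c0 * (cu * cv)) * (if x ∈ A then (1:ℝ) else 0)) *
              ∑ y ∈ B, ((if G.Adj x y then (1:ℝ) else 0) - d p) := by
          intro x
          rw [Finset.sum_congr rfl (fun y _ => hdecomp x y),
            ← hind_sum B (fun y => (if G.Adj x y then (1:ℝ) else 0) - d p), Finset.mul_sum]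
          exact Finset.sum_congr rfl (fun y _ => by ring)
        rw [Finset.sum_congr rfl (fun x _ => hx x),
          ← hind_sum A (fun x => ∑ y ∈ B, ((if G.Adj x y then (1:ℝ) else 0) - d p)),
          Finset.mul_sum]
        exact Finset.sum_congr rfl (fun x _ => by ring)
      rw [hsum2, hdp, abs_mul]
      have hK : |CW g * (c0 * (cu * cv))| ≤ CW g := by
        rw [abs_of_nonneg (mul_nonneg (hCW0 g)
          (mul_nonneg hc001.1 (mul_nonneg hcu01.1 hcv01.1)))]
        have hX : c0 * (cu * cv) ≤ 1 := by
          calc c0 * (cu * cv) ≤ 1 * (1 * 1) :=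
              mul_le_mul hc001.2 (mul_le_mul hcu01.2 hcv01.2 hcv01.1 zero_le_one)
                (mul_nonneg hcu01.1 hcv01.1) zero_le_one
            _ = 1 := by norm_num
        calc CW g * (c0 * (cu * cv)) ≤ CW g * 1 := mul_le_mul_of_nonneg_left hX (hCW0 g)
          _ = CW g := mul_one _
      have hAsub : A ⊆ W i := by rw [hA]; exact Finset.filter_subset _ _
      have hBsub : B ⊆ W j := by rw [hB]; exact Finset.filter_subset _ _
      have hcut := my_cut_bound G hε (hreg i j hne) hAsub hBsub
      exact mul_le_mul hK hcut (abs_nonneg _) (hCW0 g)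
    have hgsum : (∑ g : {m : Fin k // m ≠ i ∧ m ≠ j} → V, CW g)
        = ∏ m : {m : Fin k // m ≠ i ∧ m ≠ j}, ((W m.1).card : ℝ) := by
      simp only [hCW]
      rw [← Fintype.piFinset_univ]
      have hps := Finset.prod_univ_sum (κ := fun _ : {m : Fin k // m ≠ i ∧ m ≠ j} => V)
        (t := fun _ => univ) (f := fun m x => if x ∈ W m.1 then (1:ℝ) else 0)
      rw [← hps]
      refine Finset.prod_congr rfl (fun m _ => ?_)
      rw [Finset.sum_boole]
      congr 1
      simp
    rw [hdiff, hsum_split]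
    calc |∑ g : {m : Fin k // m ≠ i ∧ m ≠ j} → V, ∑ x : V, ∑ y : V, T (Φ x y g)|
        ≤ ∑ g : {m : Fin k // m ≠ i ∧ m ≠ j} → V, |∑ x : V, ∑ y : V, T (Φ x y g)| :=
          Finset.abs_sum_le_sum_abs _ _
      _ ≤ ∑ g : {m : Fin k // m ≠ i ∧ m ≠ j} → V,
            CW g * (ε * (((W i).card : ℝ) * ((W j).card : ℝ))) :=
          Finset.sum_le_sum (fun g _ => inner_bound g)
      _ = (∑ g : {m : Fin k // m ≠ i ∧ m ≠ j} → V, CW g) *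
            (ε * (((W i).card : ℝ) * ((W j).card : ℝ))) := by rw [← Finset.sum_mul]
      _ = (∏ m : {m : Fin k // m ≠ i ∧ m ≠ j}, ((W m.1).card : ℝ)) *
            (ε * (((W i).card : ℝ) * ((W j).card : ℝ))) := by rw [hgsum]
      _ = ε * Pr := by
          rw [hPr, my_prod_split_two hne (fun m => ((W m).card : ℝ))]
          ring
  -- Step D : telescoping
  have hmain : ∀ S : Finset (Fin k × Fin k), S ⊆ P → N ∅ - N S ≤ ε * S.card * Pr := by
    intro S
    induction S using Finset.induction_on with
    | empty => intro _; simp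
    | @insert p S hp ih =>
      intro hsub
      have hpP : p ∈ P := hsub (mem_insert_self p S)
      have hS : S ⊆ P := fun q hq => hsub (mem_insert_of_mem hq)
      have h1 := ih hS
      have h2 := keystep p hpP S hS hp
      have h3 : N S - N (insert p S) ≤ ε * Pr := by
        have := abs_le.1 h2
        linarith [this.1]
      rw [Finset.card_insert_of_notMem hp]
      push_cast
      linarith
  have hfin := hmain P (subset_refl P)
  rw [hN0] at hfin
  have hcard : ((P.card : ℕ) : ℝ) = (k.choose 2 : ℝ) := by
    rw [hPdef, my_card_pairs k]
  rw [hcard] at hfin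
  rw [ge_iff_le, hNP]
  have expand : ((∏ q ∈ P, d q) - ε * (k.choose 2 : ℝ)) * Pr
      = (∏ q ∈ P, d q) * Pr - ε * (k.choose 2 : ℝ) * Pr := by ring
  rw [expand]
  linarith
end

section
/- Let k ≥ 3, c > 1, γ > 0 small, p₀ = c^{-1/k}(1 + γ/2), δ ≤ γ/(4c), N = c·2^k·n, and suppose there are sets V_i and at least m/2^k sets V_j (indexed by J) with d_R(V_i, V_j) ≥ p₀ − pδ and all pairs ε-regular with ε small. If the internal red p-density of each part is at least 1/2, then by the counting lemma there is a red K_k contained in at least ∑_{j∈J}((p₀ − pδ)^k − δ)|V_j| ≥ n red copies of K_{k+1}, yielding a red book B_n^{(k)}. -/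
/-- The `p`-density of the pair `(s,t)` in `G`: the number of adjacent ordered pairs in
`s × t` divided by `p|s||t|` (edges inside `s ∩ t` are counted twice, as in the paper). -/
noncomputable def pDensity {V : Type*} [DecidableEq V] (G : SimpleGraph V) [DecidableRel G.Adj]
    (p : ℝ) (s t : Finset V) : ℝ :=
  (((s ×ˢ t).filter fun q => G.Adj q.1 q.2).card : ℝ) / (p * s.card * t.card)

/-- The pair `(s,t)` is `(ε,p)`-regular in `G`: all sub-pairs `(s',t')` with
`|s'| ≥ ε|s|`, `|t'| ≥ ε|t|` have `p`-density within `ε` of that of `(s,t)`. -/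
def IsPRegularPair {V : Type*} [DecidableEq V] (G : SimpleGraph V) [DecidableRel G.Adj]
    (ε p : ℝ) (s t : Finset V) : Prop :=
  ∀ s' ⊆ s, ∀ t' ⊆ t, ε * s.card ≤ s'.card → ε * t.card ≤ t'.card →
    |pDensity G p s' t' - pDensity G p s t| ≤ ε

private lemma arith_aux (c M ε K n Φ A : ℝ) (hc : 1 < c) (hM0 : 0 ≤ M)
    (hκc : 1 + M ≤ (A - K*ε)*c) (hcn : 1 < c*n) (hΦ : c*n - 1/8 ≤ Φ) :
    n - 1 < (A - K*ε)*Φ := by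
  have hc0 : (0:ℝ) < c := by linarith
  have hκ0 : 0 < A - K*ε := by
    by_contra h
    push_neg at h
    have := mul_nonpos_of_nonpos_of_nonneg h hc0.le
    linarith
  have h4 : (A - K*ε) * (c*n - 1/8) ≤ (A - K*ε) * Φ := mul_le_mul_of_nonneg_left hΦ hκ0.le
  have h5 : (n-1)*c < ((A - K*ε)*c) * (c*n - 1/8) := by
    have h6 : (1 + M) * (c*n - 1/8) ≤ ((A - K*ε)*c) * (c*n - 1/8) :=
      mul_le_mul_of_nonneg_right hκc (by linarith)
    have h7 : 0 ≤ M * (c*n - 1/8) := mul_nonneg hM0 (by linarith)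
    nlinarith
  have h8 : (n-1)*c < ((A - K*ε) * Φ) * c := by nlinarith
  exact lt_of_mul_lt_mul_right h8 hc0.le

private theorem arith_key (k : ℕ) (hk3 : 3 ≤ k) (c μ ε n Φ b : ℝ) (hc : 1 < c) (hμ : 0 < μ)
    (hb : 0 < b) (hbk : b ^ k * c = 1) (hn : 1 ≤ n) (hε0 : 0 < ε)
    (hε1 : ε ≤ μ / (4 * c)) (hε2 : ε ≤ (c - 1) / (2 * c * k))
    (hΦ : c * n - 1/8 ≤ Φ) :
    n - 1 < ((min (b * (1 + μ/2)) 1) ^ k - k * ε) * Φ := by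
  have hc0 : (0:ℝ) < c := by linarith
  have hk0 : (3:ℝ) ≤ (k:ℝ) := by exact_mod_cast hk3
  have hcn : 1 < c * n := by nlinarith
  have hΦ0 : 0 < Φ := by nlinarith
  rcases le_or_gt 1 (b * (1 + μ/2)) with ha | ha
  · rw [min_eq_right ha, one_pow]
    have hkε : (k:ℝ) * ε ≤ (c-1)/(2*c) := by
      have h1 : (k:ℝ) * ε ≤ (k:ℝ) * ((c - 1) / (2 * c * k)) :=
        mul_le_mul_of_nonneg_left hε2 (by linarith)
      have h2 : (k:ℝ) * ((c - 1) / (2 * c * k)) = (c-1)/(2*c) := by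
        field_simp
      linarith
    have hκ : (c+1)/(2*c) ≤ 1 - (k:ℝ)*ε := by
      have : (c-1)/(2*c) + (c+1)/(2*c) = 1 := by field_simp; ring
      linarith
    have hκ0 : 0 < (c+1)/(2*c) := by positivity
    have h3 : (c+1)/(2*c) * Φ ≤ (1 - (k:ℝ)*ε) * Φ := mul_le_mul_of_nonneg_right hκ hΦ0.le
    have h4 : (c+1)/(2*c) * (c*n - 1/8) ≤ (c+1)/(2*c) * Φ := mul_le_mul_of_nonneg_left hΦ hκ0.le
    have h5 : n - 1 < (c+1)/(2*c) * (c*n - 1/8) := by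
      rw [div_mul_eq_mul_div, lt_div_iff₀ (by linarith)]
      nlinarith [mul_nonneg (mul_nonneg hc0.le (by linarith : (0:ℝ) ≤ c - 1))
        (by linarith : (0:ℝ) ≤ n)]
    linarith
  · rw [min_eq_left ha.le]
    apply arith_aux c ((k:ℝ)*μ/4) ε (k:ℝ) n Φ _ hc (by positivity) _ hcn hΦ
    have hak : (b * (1 + μ/2)) ^ k * c = (1 + μ/2)^k := by
      rw [mul_pow, mul_assoc, mul_comm ((1+μ/2)^k), ← mul_assoc, hbk, one_mul]
    have hbern : 1 + 2*((k:ℝ)*μ/4) ≤ (1 + μ/2)^k := by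
      have := one_add_mul_le_pow (a := μ/2) (by linarith) k
      linarith
    have hkεc : (k:ℝ) * ε * c ≤ (k:ℝ)*μ/4 := by
      have h1 : ε * c ≤ μ/4 := by
        have h := hε1; rw [le_div_iff₀ (by positivity)] at h; linarith
      nlinarith
    have hexp : ((b * (1 + μ/2))^k - (k:ℝ)*ε)*c = (b * (1 + μ/2))^k * c - (k:ℝ)*ε*c := by ring
    rw [hexp, hak]
    linarith

private lemma card_filter_prod {V : Type*} [DecidableEq V] (r : V → V → Prop) [DecidableRel r]
    (s t : Finset V) :
    ((s ×ˢ t).filter fun q => r q.1 q.2).card = ∑ v ∈ s, (t.filter (r v)).card := by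
  rw [Finset.card_filter, Finset.sum_product]
  exact Finset.sum_congr rfl fun v _ => (Finset.card_filter _ _).symm

private lemma bad_set_small {V : Type*} [DecidableEq V] (G : SimpleGraph V) [DecidableRel G.Adj]
    {ε p : ℝ} (S T T' : Finset V) (hε : 0 < ε) (hp : 0 < p) (hS : 0 < (S.card : ℝ))
    (hT' : T' ⊆ T) (hT'c : ε * T.card ≤ (T'.card : ℝ)) (hT'0 : 0 < (T'.card : ℝ))
    (hreg : IsPRegularPair G ε p S T) :
    ((S.filter fun v => ((T'.filter (G.Adj v)).card : ℝ)
        < p * (pDensity G p S T - ε) * T'.card).card : ℝ) < ε * S.card := by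
  classical
  by_contra hcon
  push_neg at hcon
  set B := S.filter fun v => ((T'.filter (G.Adj v)).card : ℝ)
      < p * (pDensity G p S T - ε) * T'.card with hBdef
  have hBS : B ⊆ S := Finset.filter_subset _ _
  have hB0 : 0 < (B.card : ℝ) := lt_of_lt_of_le (mul_pos hε hS) hcon
  have hBne : B.Nonempty := Finset.card_pos.mp (by exact_mod_cast hB0)
  have hreg' := hreg B hBS T' hT' hcon hT'c
  have hsum : (((B ×ˢ T').filter fun q => G.Adj q.1 q.2).card : ℝ)
      < p * (pDensity G p S T - ε) * T'.card * B.card := by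
    rw [card_filter_prod]
    push_cast
    calc (∑ v ∈ B, ((T'.filter (G.Adj v)).card : ℝ))
        < ∑ _v ∈ B, p * (pDensity G p S T - ε) * T'.card :=
          Finset.sum_lt_sum_of_nonempty hBne fun v hv => (Finset.mem_filter.mp hv).2
      _ = p * (pDensity G p S T - ε) * T'.card * B.card := by
          rw [Finset.sum_const, nsmul_eq_mul]; ring
  have hlt : pDensity G p B T' < pDensity G p S T - ε := by
    rw [pDensity, div_lt_iff₀ (by positivity)]
    calc (((B ×ˢ T').filter fun q => G.Adj q.1 q.2).card : ℝ)
        < p * (pDensity G p S T - ε) * T'.card * B.card := hsum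
      _ = (pDensity G p S T - ε) * (p * B.card * T'.card) := by ring
  have := (abs_le.mp hreg').1
  linarith

private lemma pDensity_mul {V : Type*} [DecidableEq V] (G : SimpleGraph V) [DecidableRel G.Adj]
    {p : ℝ} (hp : p ≠ 0) (s t : Finset V) :
    p * pDensity G p s t = pDensity G 1 s t := by
  unfold pDensity
  rw [one_mul, show p * (s.card:ℝ) * t.card = p * ((s.card:ℝ) * t.card) by ring,
    mul_div_assoc', mul_div_mul_left _ _ hp]

set_option maxHeartbeats 8000000 in
/-- The low-degree case of the upper-threshold proof: there is an `ε₀ > 0` such that with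
`k ≥ 3`, `c > 1`, `γ > 0` small, `p = c^{-1/k}(1+γ)`, `p₀ = c^{-1/k}(1+γ/2)`,
`δ ≤ γ/(4c)` and `N = ⌊c·2^k·n⌋`: whenever a part `V₀` has internal red `p`-density at
least `1/2`, and there are at least `m/2^k` pairwise disjoint parts `W j` (`j ∈ J`) of size
at least `N/m` with red density `d_R(V₀, W j) ≥ p₀ − pδ` and all relevant pairs
`(ε,p)`-regular with `ε ≤ ε₀`, then there is a red `K_k` in `V₀` contained in at least `n`
red copies of `K_{k+1}`, i.e. a red book `B_n^{(k)}`. -/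
theorem low_degree_case_red_book (k : ℕ) (hk : 3 ≤ k) (c γ : ℝ) (hc : 1 < c)
    (hγ0 : 0 < γ) (hγ1 : γ ≤ 1) :
    ∃ ε₀ > (0 : ℝ),
      ∀ (p p₀ δ : ℝ), p = c ^ (-(1 : ℝ) / (k : ℝ)) * (1 + γ) →
        p₀ = c ^ (-(1 : ℝ) / (k : ℝ)) * (1 + γ / 2) →
        0 < δ → δ ≤ γ / (4 * c) →
      ∀ ε, 0 < ε → ε ≤ ε₀ →
      ∀ (n m : ℕ), 1 ≤ n → 1 ≤ m →
      ∀ {V : Type} [Fintype V] [DecidableEq V] (R : SimpleGraph V),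
      ∀ [DecidableRel R.Adj],
      ∀ (V₀ : Finset V) (ι : Type) (J : Finset ι) (W : ι → Finset V),
        (m : ℝ) / 2 ^ k ≤ (J.card : ℝ) →
        (∀ j ∈ J, ((⌊c * 2 ^ k * (n : ℝ)⌋₊ : ℕ) : ℝ) / (m : ℝ) ≤ ((W j).card : ℝ)) →
        (∀ j₁ ∈ J, ∀ j₂ ∈ J, j₁ ≠ j₂ → Disjoint (W j₁) (W j₂)) →
        IsPRegularPair R ε p V₀ V₀ →
        (∀ j ∈ J, IsPRegularPair R ε p V₀ (W j)) →
        (1 / 2 : ℝ) ≤ pDensity R p V₀ V₀ →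
        (∀ j ∈ J, p₀ - p * δ ≤ pDensity R 1 V₀ (W j)) →
        ∃ s : Finset V, ↑s ⊆ (V₀ : Set V) ∧ R.IsNClique k s ∧
          n ≤ ((J.biUnion W).filter fun w => ∀ v ∈ s, R.Adj v w).card := by
  classical
  have hc0 : (0:ℝ) < c := by linarith
  have hk0 : (3:ℝ) ≤ (k:ℝ) := by exact_mod_cast hk
  obtain ⟨b, hbdef⟩ : ∃ b : ℝ, b = c ^ (-(1 : ℝ) / (k : ℝ)) := ⟨_, rfl⟩
  have hb0 : 0 < b := hbdef ▸ Real.rpow_pos_of_pos hc0 _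
  have hb1 : b ≤ 1 := by
    rw [hbdef]
    apply Real.rpow_le_one_of_one_le_of_nonpos hc.le
    rw [neg_div, neg_nonpos]
    positivity
  have hbk : b ^ k * c = 1 := by
    rw [hbdef, ← Real.rpow_natCast (c ^ (-(1:ℝ)/(k:ℝ))) k, ← Real.rpow_mul hc0.le,
      show (-(1:ℝ)/(k:ℝ)) * k = -1 by field_simp, Real.rpow_neg_one]
    field_simp
  have hbc : 1/c ≤ b := by
    have h : c ^ (-1:ℝ) ≤ b := by
      rw [hbdef]
      apply Real.rpow_le_rpow_of_exponent_le hc.le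
      rw [neg_div, neg_le_neg_iff, div_le_one (by linarith : (0:ℝ) < (k:ℝ))]
      linarith
    rwa [Real.rpow_neg_one, inv_eq_one_div] at h
  obtain ⟨μ, hμdef⟩ : ∃ μ : ℝ, μ = γ * (c-1) / (2*c) := ⟨_, rfl⟩
  have hμ0 : 0 < μ := hμdef ▸ div_pos (mul_pos hγ0 (by linarith)) (by linarith)
  obtain ⟨r, hrdef⟩ : ∃ r : ℝ, r = 1/(4*c) := ⟨_, rfl⟩
  have hr0 : 0 < r := by rw [hrdef]; positivity
  have hr1 : r ≤ 1 := by rw [hrdef, div_le_one (by linarith)]; linarith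
  refine ⟨min (min (1/4) (μ/(4*c))) (min ((c-1)/(2*c*k)) (r^(k-1)/2)), ?_, ?_⟩
  · apply lt_min (lt_min (by norm_num) (by positivity))
    apply lt_min (div_pos (by linarith) (by positivity)) (by positivity)
  intro p p₀ δ hp hp₀ hδ0 hδ ε hε0 hεε₀ n m hn hm V _inst1 _inst2 R _inst3
    V₀ ι J W hJ hW hdisj hreg0 hregW hd0 hdW
  rw [← hbdef] at hp hp₀
  have hε14 : ε ≤ 1/4 := le_trans hεε₀ (le_trans (min_le_left _ _) (min_le_left _ _))
  have hεμ : ε ≤ μ/(4*c) := le_trans hεε₀ (le_trans (min_le_left _ _) (min_le_right _ _))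
  have hεck : ε ≤ (c-1)/(2*c*k) :=
    le_trans hεε₀ (le_trans (min_le_right _ _) (min_le_left _ _))
  have hεr : 2*ε ≤ r^(k-1) := by
    have := le_trans hεε₀ (le_trans (min_le_right _ _) (min_le_right _ _))
    linarith
  have hp0 : 0 < p := by rw [hp]; positivity
  have hpb : b ≤ p := by
    rw [hp]
    calc b = b*1 := (mul_one b).symm
      _ ≤ b*(1+γ) := mul_le_mul_of_nonneg_left (by linarith) hb0.le
  have hn1 : (1:ℝ) ≤ n := by exact_mod_cast hn
  have hm1 : (1:ℝ) ≤ m := by exact_mod_cast hm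
  have h2k : (8:ℝ) ≤ 2^k := by
    calc (8:ℝ) = 2^3 := by norm_num
      _ ≤ 2^k := pow_le_pow_right₀ (by norm_num) hk
  -- the quantity q and its lower bound
  obtain ⟨q, hqdef⟩ : ∃ q : ℝ, q = p₀ - p*δ - ε*p := ⟨_, rfl⟩
  have hμγ : μ = γ/2 - γ/(2*c) := by rw [hμdef]; field_simp
  have hq : b*(1+μ/2) ≤ q := by
    have h1 : (1+γ)*δ ≤ γ/(2*c) := by
      have h1a : (1+γ)*δ ≤ 2*δ :=
        mul_le_mul_of_nonneg_right (by linarith : (1+γ:ℝ) ≤ 2) hδ0.le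
      have h1b : 2*δ ≤ γ/(2*c) := by
        rw [show γ/(2*c) = 2*(γ/(4*c)) by field_simp; ring]
        linarith
      linarith
    have h2 : ε*(1+γ) ≤ μ/2 := by
      have h2a : μ/(4*c) ≤ μ/4 := by
        rw [div_le_div_iff₀ (by linarith) (by norm_num)]
        linarith only [mul_nonneg hμ0.le (by linarith : (0:ℝ) ≤ c - 1)]
      have h2b : ε*(1+γ) ≤ 2*ε := by
        have := mul_le_mul_of_nonneg_left (by linarith : (1+γ:ℝ) ≤ 2) hε0.le
        linarith only [this]
      linarith
    have hqeq : q = b*(1 + γ/2 - (1+γ)*δ - ε*(1+γ)) := by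
      rw [hqdef, hp, hp₀]; ring
    rw [hqeq]
    apply mul_le_mul_of_nonneg_left _ hb0.le
    linarith
  obtain ⟨qt, hqtdef⟩ : ∃ qt : ℝ, qt = min q 1 := ⟨_, rfl⟩
  have hqta : min (b*(1+μ/2)) 1 ≤ qt := hqtdef ▸ min_le_min hq le_rfl
  have hqt0 : 0 < qt := hqtdef ▸ lt_min (lt_of_lt_of_le (by positivity) hq) one_pos
  have hqt1 : qt ≤ 1 := hqtdef ▸ min_le_right _ _
  have hqtq : qt ≤ q := hqtdef ▸ min_le_left _ _
  -- the total weight Φ₀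
  obtain ⟨Φ₀, hΦ₀def⟩ : ∃ x : ℝ, x = ∑ j ∈ J, ((W j).card : ℝ) := ⟨_, rfl⟩
  have hNlb : c * 2^k * n - 1 ≤ ((⌊c * 2^k * (n:ℝ)⌋₊ : ℕ) : ℝ) := by
    have := Nat.lt_floor_add_one (c * 2^k * (n:ℝ))
    push_cast at this ⊢
    linarith
  have hΦ₀ : c * n - 1/8 ≤ Φ₀ := by
    have h1 : (J.card : ℝ) * (((⌊c * 2^k * (n:ℝ)⌋₊ : ℕ):ℝ)/m) ≤ Φ₀ := by
      have := Finset.card_nsmul_le_sum J (fun j => ((W j).card:ℝ))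
        ((((⌊c * 2^k * (n:ℝ)⌋₊ : ℕ)):ℝ)/m) hW
      rw [nsmul_eq_mul] at this
      rw [hΦ₀def]
      exact this
    have hfrac0 : (0:ℝ) ≤ (((⌊c * 2^k * (n:ℝ)⌋₊ : ℕ)):ℝ)/m := by positivity
    have h2 : ((m:ℝ)/2^k) * ((((⌊c * 2^k * (n:ℝ)⌋₊ : ℕ)):ℝ)/m)
        ≤ (J.card:ℝ) * ((((⌊c * 2^k * (n:ℝ)⌋₊ : ℕ)):ℝ)/m) :=
      mul_le_mul_of_nonneg_right hJ hfrac0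
    have h3 : ((m:ℝ)/2^k) * ((((⌊c * 2^k * (n:ℝ)⌋₊ : ℕ)):ℝ)/m)
        = (((⌊c * 2^k * (n:ℝ)⌋₊ : ℕ)):ℝ)/2^k := by
      rw [div_mul_div_comm, mul_comm, ← div_mul_div_comm, div_self (by linarith : (m:ℝ) ≠ 0),
        mul_one]
    have h4 : c*n - 1/8 ≤ (((⌊c * 2^k * (n:ℝ)⌋₊ : ℕ)):ℝ)/2^k := by
      rw [le_div_iff₀ (by positivity)]
      linarith only [hNlb, h2k]
    linarith
  have hcn1 : (1:ℝ) ≤ c*n := by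
    have h := mul_le_mul hc.le hn1 zero_le_one hc0.le
    linarith only [h]
  have hΦ₀0 : (0:ℝ) ≤ Φ₀ := by linarith
  -- V₀ is nonempty
  have hV₀0 : 0 < (V₀.card : ℝ) := by
    by_contra h
    push_neg at h
    have hz : (V₀.card:ℝ) = 0 := le_antisymm h (by positivity)
    have hzz : p * (V₀.card:ℝ) * V₀.card = 0 := by rw [hz]; ring
    rw [pDensity, hzz, div_zero] at hd0
    norm_num at hd0
  -- parts are nonempty
  have hNge1 : (1:ℝ) ≤ ((⌊c*2^k*(n:ℝ)⌋₊ : ℕ) : ℝ) := by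
    have h1 : (1:ℕ) ≤ ⌊c*2^k*(n:ℝ)⌋₊ := by
      apply Nat.le_floor
      push_cast
      have ha : (1:ℝ)*1 ≤ c*2^k := mul_le_mul hc.le (by linarith only [h2k]) zero_le_one hc0.le
      have hb' : c*2^k*1 ≤ c*2^k*n :=
        mul_le_mul_of_nonneg_left hn1 (by linarith only [ha])
      linarith only [ha, hb']
    exact_mod_cast h1
  have hWpos : ∀ j ∈ J, 0 < ((W j).card : ℝ) := fun j hj =>
    lt_of_lt_of_le (div_pos (by linarith) (by linarith)) (hW j hj)
  have hpD : ∀ j ∈ J, p₀ - p*δ ≤ p * pDensity R p V₀ (W j) := fun j hj => by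
    rw [pDensity_mul R hp0.ne']
    exact hdW j hj
  -- main induction: building the clique step by step
  have main : ∀ i, i ≤ k → ∃ (s U : Finset V) (A : Finset ι) (X : ι → Finset V),
      s.card = i ∧ R.IsClique ↑s ∧ ↑s ⊆ (V₀ : Set V) ∧ U ⊆ V₀ ∧
      (∀ v ∈ s, ∀ u ∈ U, R.Adj v u) ∧
      r ^ i * V₀.card ≤ (U.card : ℝ) ∧
      A ⊆ J ∧ (∀ j ∈ A, X j ⊆ W j) ∧
      (∀ j ∈ A, ∀ v ∈ s, ∀ w ∈ X j, R.Adj v w) ∧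
      qt ^ i * Φ₀ - i * ε * Φ₀ ≤ ∑ j ∈ A, ((X j).card : ℝ) := by
    intro i
    induction i with
    | zero =>
      intro _
      exact ⟨∅, V₀, J, W, by simp, by simp, by simp, subset_rfl, by simp, by simp,
        subset_rfl, fun j _ => subset_rfl, by simp, by norm_num [hΦ₀def]⟩
    | succ i ih =>
      intro hik
      obtain ⟨s, U, A, X, hs_card, hs_cl, hsV, hUV, hsU, hUc, hAJ, hXW, hsX, hΦ⟩ :=
        ih (by omega)
      have hik' : i ≤ k - 1 := by omega
      have hri : r ^ (k-1) ≤ r ^ i := pow_le_pow_of_le_one hr0.le hr1 hik'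
      have hU2ε : 2*ε * V₀.card ≤ (U.card:ℝ) := by
        have h1 : 2*ε ≤ r^i := le_trans hεr hri
        have h2 : 2*ε * V₀.card ≤ r^i * V₀.card :=
          mul_le_mul_of_nonneg_right h1 (Nat.cast_nonneg _)
        linarith only [h2, hUc]
      have hUε : ε * V₀.card ≤ (U.card:ℝ) := by
        have h3 : 0 ≤ ε * V₀.card := mul_nonneg hε0.le (Nat.cast_nonneg _)
        linarith only [h3, hU2ε]
      have hU0 : 0 < (U.card:ℝ) := lt_of_lt_of_le (mul_pos hε0 hV₀0) hUε
      -- the bad set for U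
      have hBad : ((V₀.filter fun v => ((U.filter (R.Adj v)).card : ℝ)
          < p * (pDensity R p V₀ V₀ - ε) * U.card).card : ℝ) < ε * V₀.card :=
        bad_set_small R V₀ V₀ U hε0 hp0 hV₀0 hUV hUε hU0 hreg0
      obtain ⟨Bad, hBaddef⟩ : ∃ B : Finset V, B = V₀.filter fun v => ((U.filter (R.Adj v)).card : ℝ)
          < p * (pDensity R p V₀ V₀ - ε) * U.card := ⟨_, rfl⟩
      rw [← hBaddef] at hBad
      obtain ⟨G, hGdef⟩ : ∃ G : Finset V, G = U \ Bad := ⟨_, rfl⟩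
      have hGU : G ⊆ U := hGdef ▸ Finset.sdiff_subset
      have hGV : G ⊆ V₀ := hGU.trans hUV
      have hGc : ε * V₀.card ≤ (G.card : ℝ) := by
        have h1 := Finset.le_card_sdiff Bad U
        rw [← hGdef] at h1
        have h2 : U.card ≤ G.card + Bad.card := by omega
        have h3 : (U.card:ℝ) ≤ (G.card:ℝ) + Bad.card := by exact_mod_cast h2
        linarith
      have hG0 : 0 < (G.card:ℝ) := lt_of_lt_of_le (mul_pos hε0 hV₀0) hGc
      have hGne : G.Nonempty := Finset.card_pos.mp (by exact_mod_cast hG0)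
      -- discard parts that became too small
      obtain ⟨A', hA'def⟩ : ∃ A' : Finset ι,
          A' = A.filter (fun j => ε * ((W j).card:ℝ) ≤ ((X j).card : ℝ)) := ⟨_, rfl⟩
      have hA'A : A' ⊆ A := hA'def ▸ Finset.filter_subset _ _
      have hΦ' : (∑ j ∈ A, ((X j).card:ℝ)) - ε * Φ₀ ≤ ∑ j ∈ A', ((X j).card:ℝ) := by
        have hsplit : ∑ j ∈ A, ((X j).card:ℝ)
            = ∑ j ∈ A', ((X j).card:ℝ)
              + ∑ j ∈ A.filter (fun j => ¬ (ε * ((W j).card:ℝ) ≤ ((X j).card : ℝ))),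
                ((X j).card:ℝ) :=
          hA'def ▸ (Finset.sum_filter_add_sum_filter_not A _ _).symm
        have hsmall : ∑ j ∈ A.filter (fun j => ¬ (ε * ((W j).card:ℝ) ≤ ((X j).card : ℝ))),
            ((X j).card:ℝ) ≤ ε * Φ₀ := by
          calc ∑ j ∈ A.filter (fun j => ¬ (ε * ((W j).card:ℝ) ≤ ((X j).card : ℝ))),
              ((X j).card:ℝ)
              ≤ ∑ j ∈ A.filter (fun j => ¬ (ε * ((W j).card:ℝ) ≤ ((X j).card : ℝ))),
                ε * ((W j).card:ℝ) :=
                Finset.sum_le_sum fun j hj => (not_le.mp (Finset.mem_filter.mp hj).2).le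
            _ ≤ ∑ j ∈ J, ε * ((W j).card:ℝ) :=
                Finset.sum_le_sum_of_subset_of_nonneg
                  ((Finset.filter_subset _ _).trans hAJ) (fun j _ _ => by positivity)
            _ = ε * Φ₀ := by rw [hΦ₀def, Finset.mul_sum]
        linarith
      -- edge counts into each surviving part
      have hedge : ∀ j ∈ A', q * ((G.card:ℝ) * (X j).card)
          ≤ ∑ v ∈ G, (((X j).filter (R.Adj v)).card : ℝ) := by
        intro j hj
        have hjA : j ∈ A := hA'A hj
        have hjJ : j ∈ J := hAJ hjA
        have hXWj : X j ⊆ W j := hXW j hjA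
        have hXc : ε * ((W j).card:ℝ) ≤ ((X j).card:ℝ) := by
          rw [hA'def] at hj
          exact (Finset.mem_filter.mp hj).2
        have hX0 : 0 < ((X j).card:ℝ) := lt_of_lt_of_le (mul_pos hε0 (hWpos j hjJ)) hXc
        have hregj := hregW j hjJ G hGV (X j) hXWj hGc hXc
        have h1 : pDensity R p V₀ (W j) - ε ≤ pDensity R p G (X j) := by
          have := (abs_le.mp hregj).1
          linarith
        have h2 : q ≤ p * pDensity R p G (X j) := by
          have h2a : p * (pDensity R p V₀ (W j) - ε) ≤ p * pDensity R p G (X j) :=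
            mul_le_mul_of_nonneg_left h1 hp0.le
          have h2b := hpD j hjJ
          rw [hqdef]
          linarith only [h2a, h2b]
        rw [pDensity_mul R hp0.ne'] at h2
        rw [pDensity, one_mul] at h2
        have h3 : q * ((G.card:ℝ) * (X j).card)
            ≤ (((G ×ˢ X j).filter fun q => R.Adj q.1 q.2).card : ℝ) := by
          rw [← le_div_iff₀ (by positivity)]
          exact h2
        have h5 : (((G ×ˢ X j).filter fun q => R.Adj q.1 q.2).card : ℝ)
            = ∑ v ∈ G, (((X j).filter (R.Adj v)).card : ℝ) := by
          rw [card_filter_prod]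
          push_cast
          rfl
        linarith
      -- averaging to find a good vertex
      obtain ⟨v, hvG, hv⟩ : ∃ v ∈ G, q * ∑ j ∈ A', ((X j).card:ℝ)
          ≤ ∑ j ∈ A', (((X j).filter (R.Adj v)).card : ℝ) := by
        have hsum1 : ∑ j ∈ A', q * ((G.card:ℝ) * (X j).card)
            ≤ ∑ v ∈ G, ∑ j ∈ A', (((X j).filter (R.Adj v)).card : ℝ) := by
          rw [Finset.sum_comm]
          exact Finset.sum_le_sum hedge
        have hsum2 : ∑ j ∈ A', q * ((G.card:ℝ) * (X j).card)
            = (G.card:ℝ) * (q * ∑ j ∈ A', ((X j).card:ℝ)) := by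
          rw [Finset.mul_sum, Finset.mul_sum]
          exact Finset.sum_congr rfl fun j _ => by ring
        apply Finset.exists_le_of_sum_le hGne
        rw [Finset.sum_const, nsmul_eq_mul, ← hsum2]
        exact hsum1
      have hvU : v ∈ U := hGU hvG
      have hvV : v ∈ V₀ := hUV hvU
      have hvBad : v ∉ Bad := (Finset.mem_sdiff.mp (hGdef ▸ hvG)).2
      have hvdegU : p * (pDensity R p V₀ V₀ - ε) * U.card ≤ ((U.filter (R.Adj v)).card : ℝ) := by
        by_contra h
        push_neg at h
        exact hvBad (hBaddef ▸ Finset.mem_filter.mpr ⟨hvV, h⟩)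
      have hvs : v ∉ s := fun hvs => R.irrefl (hsU v hvs v hvU)
      refine ⟨insert v s, U.filter (R.Adj v), A', fun j => (X j).filter (R.Adj v),
        ?_, ?_, ?_, ?_, ?_, ?_, ?_, ?_, ?_, ?_⟩
      · rw [Finset.card_insert_of_notMem hvs, hs_card]
      · rw [Finset.coe_insert]
        exact hs_cl.insert (fun w hw _ => (hsU w hw v hvU).symm)
      · rw [Finset.coe_insert]
        exact Set.insert_subset (Finset.mem_coe.mpr hvV) hsV
      · exact (Finset.filter_subset _ _).trans hUV
      · intro w hw u hu
        rcases Finset.mem_insert.mp hw with h | h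
        · rw [h]; exact (Finset.mem_filter.mp hu).2
        · exact hsU w h u (Finset.filter_subset _ _ hu)
      · -- size of the new U
        have hrp : r ≤ p * (pDensity R p V₀ V₀ - ε) := by
          have h1 : (1:ℝ)/4 ≤ pDensity R p V₀ V₀ - ε := by linarith
          have h2 : 1/c ≤ p := le_trans hbc hpb
          calc r = (1/c) * (1/4) := by rw [hrdef]; ring
            _ ≤ p * (pDensity R p V₀ V₀ - ε) :=
                mul_le_mul h2 h1 (by norm_num) hp0.le
        have h1 : r * (r^i * V₀.card) ≤ r * (U.card:ℝ) :=
          mul_le_mul_of_nonneg_left hUc hr0.le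
        have h2 : r * (U.card:ℝ) ≤ p * (pDensity R p V₀ V₀ - ε) * U.card :=
          mul_le_mul_of_nonneg_right hrp hU0.le
        have h3 : r^(i+1) * (V₀.card:ℝ) = r * (r^i * V₀.card) := by rw [pow_succ]; ring
        linarith
      · exact hA'A.trans hAJ
      · exact fun j hj => (Finset.filter_subset _ _).trans (hXW j (hA'A hj))
      · intro j hj w hw x hx
        rcases Finset.mem_insert.mp hw with h | h
        · rw [h]; exact (Finset.mem_filter.mp hx).2
        · exact hsX j (hA'A hj) w h x (Finset.filter_subset _ _ hx)
      · -- potential bound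
        have hS'0 : (0:ℝ) ≤ ∑ j ∈ A', ((X j).card:ℝ) :=
          Finset.sum_nonneg fun j _ => Nat.cast_nonneg _
        have hL : qt^i*Φ₀ - ((i:ℝ)+1)*ε*Φ₀ ≤ ∑ j ∈ A', ((X j).card:ℝ) := by
          have := hΦ
          push_cast at this
          linarith [mul_nonneg hε0.le hΦ₀0]
        have p1 : qt * (qt^i*Φ₀ - ((i:ℝ)+1)*ε*Φ₀) ≤ qt * ∑ j ∈ A', ((X j).card:ℝ) :=
          mul_le_mul_of_nonneg_left hL hqt0.le
        have p2 : qt^(i+1)*Φ₀ - ((i:ℝ)+1)*ε*Φ₀ ≤ qt * (qt^i*Φ₀ - ((i:ℝ)+1)*ε*Φ₀) := by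
          have e1 : qt*(qt^i*Φ₀) = qt^(i+1)*Φ₀ := by rw [pow_succ]; ring
          have e2 : 0 ≤ ((i:ℝ)+1)*ε*Φ₀ := by positivity
          have e3 : qt * (((i:ℝ)+1)*ε*Φ₀) ≤ ((i:ℝ)+1)*ε*Φ₀ := mul_le_of_le_one_left e2 hqt1
          rw [mul_sub, e1]
          linarith
        have p3 : qt * ∑ j ∈ A', ((X j).card:ℝ) ≤ q * ∑ j ∈ A', ((X j).card:ℝ) :=
          mul_le_mul_of_nonneg_right hqtq hS'0
        push_cast
        linarith
  -- use the clique of size k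
  obtain ⟨s, U, A, X, hs_card, hs_cl, hsV, -, -, -, hAJ, hXW, hsX, hΦ⟩ := main k le_rfl
  refine ⟨s, hsV, ⟨hs_cl, hs_card⟩, ?_⟩
  have hsub : A.biUnion X ⊆ (J.biUnion W).filter fun w => ∀ v ∈ s, R.Adj v w := by
    intro w hw
    obtain ⟨j, hjA, hwX⟩ := Finset.mem_biUnion.mp hw
    exact Finset.mem_filter.mpr ⟨Finset.mem_biUnion.mpr ⟨j, hAJ hjA, hXW j hjA hwX⟩,
      fun v hv => hsX j hjA v hv w hwX⟩
  have hcard : (A.biUnion X).card = ∑ j ∈ A, (X j).card :=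
    Finset.card_biUnion fun j₁ h₁ j₂ h₂ hne =>
      (hdisj j₁ (hAJ h₁) j₂ (hAJ h₂) hne).mono (hXW j₁ h₁) (hXW j₂ h₂)
  have hTc : (∑ j ∈ A, ((X j).card:ℝ))
      ≤ (((J.biUnion W).filter fun w => ∀ v ∈ s, R.Adj v w).card : ℝ) := by
    have h1 := Finset.card_le_card hsub
    rw [hcard] at h1
    push_cast at h1 ⊢
    exact_mod_cast h1
  have hfinal : (n:ℝ) - 1 < ∑ j ∈ A, ((X j).card:ℝ) := by
    have harith := arith_key k hk c μ ε (n:ℝ) Φ₀ b hc hμ0 hb0 hbk hn1 hε0 hεμ hεck hΦ₀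
    have hpow : (min (b*(1+μ/2)) 1)^k ≤ qt^k :=
      pow_le_pow_left₀ (le_min (by positivity) zero_le_one) hqta k
    have h1 : 0 ≤ (qt^k - (min (b*(1+μ/2)) 1)^k) * Φ₀ :=
      mul_nonneg (sub_nonneg.mpr hpow) hΦ₀0
    linarith only [harith, h1, hΦ]
  have h2 : (n:ℝ) < (((J.biUnion W).filter fun w => ∀ v ∈ s, R.Adj v w).card : ℝ) + 1 := by
    linarith
  have h3 : n < ((J.biUnion W).filter fun w => ∀ v ∈ s, R.Adj v w).card + 1 := by
    exact_mod_cast h2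
  omega
end
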